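/- arXiv:1304.4180 — 9 statements merged into one kernel-verified Lean document; each statement's English description precedes it below -/
import Mathlib

section
/- Let P be a stochastic matrix on a finite set X, lumpable with respect to a partition 𝓛 of X, and let P̃ be the lumped chain. Then every eigenvalue of P̃ is an eigenvalue of P, i.e. σ(P̃) ⊆ σ(P). -/
/-- If the stochastic matrix `p` on a finite set `X` is lumpable with respect to a
partition `L_1, …, L_k` with lumped chain `ptilde`, then every eigenvalue of the lumped chain
is an eigenvalue of `p`: `σ(P̃) ⊆ σ(P)`. -/
theorem stmt_2 {X : Type*} [Fintype X] {k : ℕ}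
    (p : X → X → ℝ)
    (hp_nonneg : ∀ x y, 0 ≤ p x y) (hp_row : ∀ x, ∑ y, p x y = 1)
    (L : Fin k → Finset X)
    (hL_nonempty : ∀ i, (L i).Nonempty)
    (hL_part : ∀ x : X, ∃! i, x ∈ L i)
    (hlump : ∀ i j : Fin k, ∀ x ∈ L i, ∀ x' ∈ L i,
        ∑ y ∈ L j, p x y = ∑ y ∈ L j, p x' y)
    (ptilde : Fin k → Fin k → ℝ)
    (hpt : ∀ i j : Fin k, ∀ x ∈ L i, ptilde i j = ∑ y ∈ L j, p x y) :
    ∀ lam : ℂ,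
      (∃ f : Fin k → ℂ, f ≠ 0 ∧ ∀ i, ∑ j, (ptilde i j : ℂ) * f j = lam * f i) →
      (∃ g : X → ℂ, g ≠ 0 ∧ ∀ x, ∑ y, (p x y : ℂ) * g y = lam * g x) := by
  intro lam ⟨f, hf0, hf⟩
  classical
  set cl : X → Fin k := fun x => (hL_part x).choose with hcl_def
  have hcl_mem : ∀ x, x ∈ L (cl x) := fun x => (hL_part x).choose_spec.1
  have hcl_uniq : ∀ x i, x ∈ L i → cl x = i := fun x i h =>
    ((hL_part x).choose_spec.2 i h).symm
  have hLfilter : ∀ j, L j = Finset.univ.filter (fun y => cl y = j) := by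
    intro j
    ext y
    simp only [Finset.mem_filter, Finset.mem_univ, true_and]
    constructor
    · exact fun h => hcl_uniq y j h
    · rintro rfl; exact hcl_mem y
  refine ⟨fun x => f (cl x), ?_, ?_⟩
  · obtain ⟨i, hi⟩ := Function.ne_iff.mp hf0
    obtain ⟨x, hx⟩ := hL_nonempty i
    intro h
    apply hi
    have := congrFun h x
    simpa [hcl_uniq x i hx] using this
  · intro x
    have key : ∑ y, (p x y : ℂ) * f (cl y)
        = ∑ j, ∑ y ∈ L j, (p x y : ℂ) * f (cl y) := by
      rw [show (∑ j, ∑ y ∈ L j, (p x y : ℂ) * f (cl y))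
          = ∑ j, ∑ y ∈ Finset.univ.filter (fun y => cl y = j), (p x y : ℂ) * f (cl y)
          from Finset.sum_congr rfl fun j _ => by rw [hLfilter j]]
      exact (Finset.sum_fiberwise _ _ _).symm
    rw [key]
    have : ∀ j, ∑ y ∈ L j, (p x y : ℂ) * f (cl y) = (ptilde (cl x) j : ℂ) * f j := by
      intro j
      rw [hpt (cl x) j x (hcl_mem x)]
      push_cast
      rw [Finset.sum_mul]
      refine Finset.sum_congr rfl fun y hy => ?_
      rw [hcl_uniq y j hy]
    rw [Finset.sum_congr rfl fun j _ => this j, hf (cl x)]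
end

section
/- Let P be a stochastic matrix on a finite set X in detailed balance with a strict probability measure π on X, and suppose P is lumpable with respect to a partition 𝓛 of X, with lumped chain P̃. Then P̃ is in detailed balance with the measure π̃ on 𝓛 defined by π̃(L) = Σ_{x∈L} π(x); that is, π̃(L) p̃(L,L') = π̃(L') p̃(L',L) for all parts L, L' of 𝓛. -/
/-- If the stochastic matrix `p` on a finite set `X` is in detailed balance with a
strict probability measure `π` and is lumpable with respect to a partition `L_1, …, L_k` with
lumped chain `ptilde`, then `ptilde` is in detailed balance with the measure
`π̃(L) = ∑_{x ∈ L} π(x)`. -/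
theorem stmt_4 {X : Type*} [Fintype X] {k : ℕ}
    (p : X → X → ℝ)
    (hp_nonneg : ∀ x y, 0 ≤ p x y) (hp_row : ∀ x, ∑ y, p x y = 1)
    (pi : X → ℝ)
    (hpi_pos : ∀ x, 0 < pi x) (hpi_sum : ∑ x, pi x = 1)
    (hdb : ∀ x y, pi x * p x y = pi y * p y x)
    (L : Fin k → Finset X)
    (hL_nonempty : ∀ i, (L i).Nonempty)
    (hL_part : ∀ x : X, ∃! i, x ∈ L i)
    (hlump : ∀ i j : Fin k, ∀ x ∈ L i, ∀ x' ∈ L i,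
        ∑ y ∈ L j, p x y = ∑ y ∈ L j, p x' y)
    (ptilde : Fin k → Fin k → ℝ)
    (hpt : ∀ i j : Fin k, ∀ x ∈ L i, ptilde i j = ∑ y ∈ L j, p x y) :
    ∀ i j : Fin k,
      (∑ x ∈ L i, pi x) * ptilde i j = (∑ x ∈ L j, pi x) * ptilde j i := by
  intro i j
  have key : ∀ (a b : Fin k), (∑ x ∈ L a, pi x) * ptilde a b
      = ∑ x ∈ L a, ∑ y ∈ L b, pi x * p x y := by
    intro a b
    rw [Finset.sum_mul]
    refine Finset.sum_congr rfl fun x hx => ?_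
    rw [hpt a b x hx, Finset.mul_sum]
  rw [key i j, key j i, Finset.sum_comm]
  exact Finset.sum_congr rfl fun y _ => Finset.sum_congr rfl fun x _ => hdb x y
end

section
/- Let 𝓟 be the generalized crested product of Markov chains on X = ∏_{i∈I} X_i associated with a finite poset (I,⪯). Let R ⊆ I and let 𝓛_R be the partition of X whose parts are the equivalence classes of the relation x ≡ y ⟺ x_i = y_i for all i ∈ I∖R. Then for all parts L, L' of 𝓛_R, the function x ↦ p(x, L') = Σ_{y∈L'} p(x,y) is constant on L; that is, 𝓟 is lumpable with respect to 𝓛_R. -/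
open scoped Classical

/-- The generalized crested product of the Markov chains `P i` on the `X i`, associated with the
finite poset `I` and the strict probability measure `p0`:
`p(x,y) = ∑ i, p0 i · P i (x i) (y i) · ∏_{j ≺ i} 1/|X j| · ∏_{j ∉ H[i]} δ(x j, y j)`. -/
noncomputable def crestedProduct {I : Type*} [Fintype I] [PartialOrder I]
    (X : I → Type*) [∀ i, Fintype (X i)]
    (p0 : I → ℝ) (P : ∀ i, X i → X i → ℝ)
    (x y : ∀ i, X i) : ℝ :=
  ∑ i, p0 i * P i (x i) (y i)
    * (∏ j ∈ Finset.univ.filter (fun j => j < i), (1 / (Fintype.card (X j) : ℝ)))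
    * ∏ j ∈ Finset.univ.filter (fun j => ¬ j ≤ i), (if x j = y j then (1 : ℝ) else 0)

/-- Coordinate-wise factor of the `i`-th term of the crested product. -/
noncomputable def gAux {I : Type*} [Fintype I] [PartialOrder I]
    (X : I → Type*) [∀ i, Fintype (X i)]
    (p0 : I → ℝ) (P : ∀ i, X i → X i → ℝ)
    (x : ∀ i, X i) (i : I) (k : I) (a : X k) : ℝ :=
  if h : k = i then p0 i * P i (x i) (h ▸ a)
  else if k < i then 1 / (Fintype.card (X k) : ℝ)
  else if x k = a then 1 else 0

lemma term_eq {I : Type*} [Fintype I] [PartialOrder I]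
    (X : I → Type*) [∀ i, Fintype (X i)]
    (p0 : I → ℝ) (P : ∀ i, X i → X i → ℝ)
    (x y : ∀ i, X i) (i : I) :
    p0 i * P i (x i) (y i)
      * (∏ j ∈ Finset.univ.filter (fun j => j < i), (1 / (Fintype.card (X j) : ℝ)))
      * ∏ j ∈ Finset.univ.filter (fun j => ¬ j ≤ i), (if x j = y j then (1 : ℝ) else 0)
    = ∏ k, gAux X p0 P x i k (y k) := by
  rw [← Finset.prod_filter_mul_prod_filter_not Finset.univ (fun k => k ≤ i)
    (fun k => gAux X p0 P x i k (y k))]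
  have h1 : Finset.univ.filter (fun k => k ≤ i)
      = insert i (Finset.univ.filter (fun k => k < i)) := by
    ext k; simp [le_iff_lt_or_eq, or_comm]
  rw [h1, Finset.prod_insert (by simp)]
  have h2 : gAux X p0 P x i i (y i) = p0 i * P i (x i) (y i) := by
    simp [gAux]
  have h3 : ∀ k ∈ Finset.univ.filter (fun k => k < i),
      gAux X p0 P x i k (y k) = 1 / (Fintype.card (X k) : ℝ) := by
    intro k hk
    simp only [Finset.mem_filter, Finset.mem_univ, true_and] at hk
    simp [gAux, ne_of_lt hk, hk]
  have h4 : ∀ k ∈ Finset.univ.filter (fun k => ¬ k ≤ i),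
      gAux X p0 P x i k (y k) = if x k = y k then (1 : ℝ) else 0 := by
    intro k hk
    simp only [Finset.mem_filter, Finset.mem_univ, true_and] at hk
    have hne : k ≠ i := fun h => hk (h ▸ le_refl i)
    have hlt : ¬ k < i := fun h => hk h.le
    simp [gAux, hne, hlt]
  rw [h2, Finset.prod_congr rfl h3, Finset.prod_congr rfl h4]

/-- Let `𝓟` be the generalized crested product on `X = ∏ i, X i` associated with a
finite poset `(I,⪯)`.  Let `R ⊆ I` and consider the partition of `X` into classes of the
relation `x ≡ y ↔ x i = y i` for all `i ∉ R`.  Then for any two classes (the class of `y0`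
and the common class of `x, x'`), the function `x ↦ p(x, L')` is constant on each class:
`𝓟` is lumpable with respect to this partition. -/
theorem stmt_6 {I : Type*} [Fintype I] [PartialOrder I]
    (X : I → Type*) [∀ i, Fintype (X i)]
    (hX : ∀ i, 2 ≤ Fintype.card (X i))
    (p0 : I → ℝ) (hp0_pos : ∀ i, 0 < p0 i) (hp0_sum : ∑ i, p0 i = 1)
    (P : ∀ i, X i → X i → ℝ)
    (hP_nonneg : ∀ i, ∀ a b : X i, 0 ≤ P i a b)
    (hP_row : ∀ i, ∀ a : X i, ∑ b, P i a b = 1)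
    (R : Finset I) :
    ∀ x x' y0 : ∀ i, X i, (∀ i ∉ R, x i = x' i) →
      ∑ y ∈ Finset.univ.filter (fun y : ∀ i, X i => ∀ i ∉ R, y i = y0 i),
          crestedProduct X p0 P x y
      = ∑ y ∈ Finset.univ.filter (fun y : ∀ i, X i => ∀ i ∉ R, y i = y0 i),
          crestedProduct X p0 P x' y := by
  intro x x' y0 hxx'
  classical
  set t : ∀ k, Finset (X k) := fun k => if k ∈ R then Finset.univ else {y0 k} with ht
  have hset : Finset.univ.filter (fun y : ∀ i, X i => ∀ i ∉ R, y i = y0 i)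
      = Fintype.piFinset t := by
    ext y
    simp only [Finset.mem_filter, Finset.mem_univ, true_and, Fintype.mem_piFinset, ht]
    constructor
    · intro h k
      by_cases hk : k ∈ R
      · simp [hk]
      · simp [hk, h k hk]
    · intro h k hk
      have := h k
      simpa [hk] using this
  have key : ∀ z : ∀ i, X i,
      ∑ y ∈ Finset.univ.filter (fun y : ∀ i, X i => ∀ i ∉ R, y i = y0 i),
        crestedProduct X p0 P z y
      = ∑ i, ∏ k, ∑ a ∈ t k, gAux X p0 P z i k a := by
    intro z
    rw [hset]
    unfold crestedProduct
    rw [Finset.sum_comm]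
    refine Finset.sum_congr rfl fun i _ => ?_
    rw [Finset.prod_univ_sum]
    exact Finset.sum_congr rfl fun y _ => term_eq X p0 P z y i
  rw [key x, key x']
  refine Finset.sum_congr rfl fun i _ => Finset.prod_congr rfl fun k _ => ?_
  by_cases hk : k ∈ R
  · simp only [ht, if_pos hk]
    by_cases hki : k = i
    · subst hki
      have hz : ∀ z : ∀ i, X i, ∑ a : X k, gAux X p0 P z k k a = p0 k := by
        intro z
        have hg : ∀ a : X k, gAux X p0 P z k k a = p0 k * P k (z k) a := fun a => by
          simp [gAux]
        rw [Finset.sum_congr rfl fun a _ => hg a, ← Finset.mul_sum, hP_row, mul_one]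
      rw [hz x, hz x']
    · by_cases hlt : k < i
      · simp [gAux, hki, hlt]
      · simp only [gAux, dif_neg hki, if_neg hlt]
        simp [Finset.sum_ite_eq]
  · have hx : x k = x' k := hxx' k hk
    simp only [ht, if_neg hk, Finset.sum_singleton]
    by_cases hki : k = i
    · subst hki
      simp [gAux, hx]
    · simp [gAux, hki, hx]
end

section
/- Let 𝓟 be the generalized crested product on X = ∏_{i∈I} X_i associated with a finite poset (I,⪯), where each factor chain is the uniform chain P_i = U_i (i.e. p_i(x,y) = 1/|X_i| for all x,y ∈ X_i). Let R ⊆ I and let 𝓛_R be the partition of X into classes of the relation x ≡ y ⟺ x_i = y_i for all i ∈ I∖R, so that 𝓟 is lumpable with respect to 𝓛_R. Then the lumped chain 𝓟̃ satisfies, for any parts L, L' of 𝓛_R and any representatives x ∈ L, y ∈ L': p̃(L,L') = Σ_{i∈I} p_i^0 · ∏_{j∈H[i]∖R} (1/|X_j|) · ∏_{j∉H[i]∪R} δ_j(x_j,y_j). -/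
open scoped Classical

/-- Let `𝓟` be the generalized crested product with all factor chains uniform
(`P i = U i`, i.e. `p_i(a,b) = 1/|X i|`).  Let `R ⊆ I` and lump by the partition
`x ≡ y ↔ ∀ i ∉ R, x i = y i`.  Then for any representatives `x, y` of two classes,
`p̃(L,L') = ∑ i, p0 i · ∏_{j ∈ H[i]∖R} 1/|X j| · ∏_{j ∉ H[i]∪R} δ(x j, y j)`. -/
theorem stmt_7 {I : Type*} [Fintype I] [PartialOrder I]
    (X : I → Type*) [∀ i, Fintype (X i)]
    (hX : ∀ i, 2 ≤ Fintype.card (X i))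
    (p0 : I → ℝ) (hp0_pos : ∀ i, 0 < p0 i) (hp0_sum : ∑ i, p0 i = 1)
    (R : Finset I) :
    ∀ x y : ∀ i, X i,
      ∑ y' ∈ Finset.univ.filter (fun y' : ∀ i, X i => ∀ i ∉ R, y' i = y i),
          crestedProduct X p0 (fun i _ _ => 1 / (Fintype.card (X i) : ℝ)) x y'
      = ∑ i, p0 i
          * (∏ j ∈ Finset.univ.filter (fun j => j ≤ i ∧ j ∉ R),
              (1 / (Fintype.card (X j) : ℝ)))
          * ∏ j ∈ Finset.univ.filter (fun j => ¬ j ≤ i ∧ j ∉ R),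
              (if x j = y j then (1 : ℝ) else 0) := by
  intro x y
  have hcard : ∀ j, (Fintype.card (X j) : ℝ) ≠ 0 := fun j => by
    have := hX j; positivity
  -- inner sum computation for fixed i
  have key : ∀ i : I,
      ∑ y' ∈ Finset.univ.filter (fun y' : ∀ j, X j => ∀ j ∉ R, y' j = y j),
        ∏ j ∈ Finset.univ.filter (fun j => ¬ j ≤ i), (if x j = y' j then (1:ℝ) else 0)
      = (∏ j ∈ Finset.univ.filter (fun j => j ≤ i ∧ j ∈ R), (Fintype.card (X j) : ℝ))
        * ∏ j ∈ Finset.univ.filter (fun j => ¬ j ≤ i ∧ j ∉ R),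
            (if x j = y j then (1:ℝ) else 0) := by
    intro i
    set f : ∀ j, X j → ℝ := fun j a =>
      (if j ∉ R then (if a = y j then (1:ℝ) else 0) else 1)
      * (if ¬ j ≤ i then (if x j = a then (1:ℝ) else 0) else 1) with hf
    have step1 :
        ∑ y' ∈ Finset.univ.filter (fun y' : ∀ j, X j => ∀ j ∉ R, y' j = y j),
          ∏ j ∈ Finset.univ.filter (fun j => ¬ j ≤ i), (if x j = y' j then (1:ℝ) else 0)
        = ∑ y' : ∀ j, X j, ∏ j, f j (y' j) := by
      rw [Finset.sum_filter]
      refine Finset.sum_congr rfl fun y' _ => ?_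
      have hsplit : ∀ j, f j (y' j) =
          (if j ∉ R then (if y' j = y j then (1:ℝ) else 0) else 1)
          * (if ¬ j ≤ i then (if x j = y' j then (1:ℝ) else 0) else 1) := fun j => rfl
      rw [Finset.prod_congr rfl (fun j _ => hsplit j), Finset.prod_mul_distrib]
      rw [← Finset.prod_filter, ← Finset.prod_filter]
      by_cases h : ∀ j ∉ R, y' j = y j
      · rw [if_pos h]
        have : ∏ j ∈ Finset.univ.filter (fun j => j ∉ R),
            (if y' j = y j then (1:ℝ) else 0) = 1 := by
          apply Finset.prod_eq_one
          intro j hj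
          rw [Finset.mem_filter] at hj
          rw [if_pos (h j hj.2)]
        rw [this, one_mul]
      · rw [if_neg h]
        push_neg at h
        obtain ⟨j, hjR, hjy⟩ := h
        rw [Finset.prod_eq_zero (i := j) (by simp [hjR]) (by rw [if_neg hjy]), zero_mul]
    rw [step1, ← Fintype.prod_sum f]
    have step2 : ∀ j, (∑ a, f j a) =
        (if j ≤ i ∧ j ∈ R then (Fintype.card (X j) : ℝ) else 1)
        * (if ¬ j ≤ i ∧ j ∉ R then (if x j = y j then (1:ℝ) else 0) else 1) := by
      intro j
      by_cases hR : j ∈ R <;> by_cases hle : j ≤ i <;>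
        simp [hf, hR, hle, Finset.sum_ite_eq', Finset.card_univ, Finset.sum_ite_eq,
          eq_comm]
    rw [Finset.prod_congr rfl (fun j _ => step2 j), Finset.prod_mul_distrib,
      ← Finset.prod_filter, ← Finset.prod_filter]
  -- main computation
  unfold crestedProduct
  rw [Finset.sum_comm]
  refine Finset.sum_congr rfl fun i _ => ?_
  have : ∑ y' ∈ Finset.univ.filter (fun y' : ∀ j, X j => ∀ j ∉ R, y' j = y j),
      p0 i * (1 / (Fintype.card (X i) : ℝ))
      * (∏ j ∈ Finset.univ.filter (fun j => j < i), (1 / (Fintype.card (X j) : ℝ)))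
      * ∏ j ∈ Finset.univ.filter (fun j => ¬ j ≤ i), (if x j = y' j then (1:ℝ) else 0)
      = p0 i * (1 / (Fintype.card (X i) : ℝ))
        * (∏ j ∈ Finset.univ.filter (fun j => j < i), (1 / (Fintype.card (X j) : ℝ)))
        * ((∏ j ∈ Finset.univ.filter (fun j => j ≤ i ∧ j ∈ R), (Fintype.card (X j) : ℝ))
          * ∏ j ∈ Finset.univ.filter (fun j => ¬ j ≤ i ∧ j ∉ R),
              (if x j = y j then (1:ℝ) else 0)) := by
    rw [← Finset.mul_sum, key i]
  rw [this]
  -- now pure arithmetic with products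
  have hfull : (1 / (Fintype.card (X i) : ℝ))
      * ∏ j ∈ Finset.univ.filter (fun j => j < i), (1 / (Fintype.card (X j) : ℝ))
      = ∏ j ∈ Finset.univ.filter (fun j => j ≤ i), (1 / (Fintype.card (X j) : ℝ)) := by
    have : Finset.univ.filter (fun j => j ≤ i)
        = insert i (Finset.univ.filter (fun j => j < i)) := by
      ext j; simp [le_iff_lt_or_eq, or_comm]
    rw [this, Finset.prod_insert (by simp)]
  have hsplit : ∏ j ∈ Finset.univ.filter (fun j => j ≤ i), (1 / (Fintype.card (X j) : ℝ))
      = (∏ j ∈ Finset.univ.filter (fun j => j ≤ i ∧ j ∈ R), (1 / (Fintype.card (X j) : ℝ)))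
        * ∏ j ∈ Finset.univ.filter (fun j => j ≤ i ∧ j ∉ R),
            (1 / (Fintype.card (X j) : ℝ)) := by
    rw [← Finset.prod_filter_mul_prod_filter_not
      (Finset.univ.filter (fun j => j ≤ i)) (fun j => j ∈ R)]
    rw [Finset.filter_filter, Finset.filter_filter]
  have hcancel : (∏ j ∈ Finset.univ.filter (fun j => j ≤ i ∧ j ∈ R),
      (1 / (Fintype.card (X j) : ℝ)))
      * ∏ j ∈ Finset.univ.filter (fun j => j ≤ i ∧ j ∈ R), (Fintype.card (X j) : ℝ) = 1 := by
    rw [← Finset.prod_mul_distrib]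
    apply Finset.prod_eq_one
    intro j _
    exact one_div_mul_cancel (hcard j)
  calc p0 i * (1 / (Fintype.card (X i) : ℝ))
      * (∏ j ∈ Finset.univ.filter (fun j => j < i), (1 / (Fintype.card (X j) : ℝ)))
      * ((∏ j ∈ Finset.univ.filter (fun j => j ≤ i ∧ j ∈ R), (Fintype.card (X j) : ℝ))
        * ∏ j ∈ Finset.univ.filter (fun j => ¬ j ≤ i ∧ j ∉ R),
            (if x j = y j then (1:ℝ) else 0))
      = p0 i * ((1 / (Fintype.card (X i) : ℝ))
        * ∏ j ∈ Finset.univ.filter (fun j => j < i), (1 / (Fintype.card (X j) : ℝ)))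
        * ((∏ j ∈ Finset.univ.filter (fun j => j ≤ i ∧ j ∈ R), (Fintype.card (X j) : ℝ))
        * ∏ j ∈ Finset.univ.filter (fun j => ¬ j ≤ i ∧ j ∉ R),
            (if x j = y j then (1:ℝ) else 0)) := by ring
    _ = p0 i * ((∏ j ∈ Finset.univ.filter (fun j => j ≤ i ∧ j ∈ R),
            (1 / (Fintype.card (X j) : ℝ)))
          * ∏ j ∈ Finset.univ.filter (fun j => j ≤ i ∧ j ∉ R),
            (1 / (Fintype.card (X j) : ℝ)))
        * ((∏ j ∈ Finset.univ.filter (fun j => j ≤ i ∧ j ∈ R), (Fintype.card (X j) : ℝ))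
        * ∏ j ∈ Finset.univ.filter (fun j => ¬ j ≤ i ∧ j ∉ R),
            (if x j = y j then (1:ℝ) else 0)) := by rw [hfull, hsplit]
    _ = p0 i * (∏ j ∈ Finset.univ.filter (fun j => j ≤ i ∧ j ∉ R),
            (1 / (Fintype.card (X j) : ℝ)))
        * ∏ j ∈ Finset.univ.filter (fun j => ¬ j ≤ i ∧ j ∉ R),
            (if x j = y j then (1:ℝ) else 0) := by
        rw [show ∀ a b c d e : ℝ, a * (b * c) * (d * e) = (b * d) * (a * c * e) from
          fun a b c d e => by ring]
        rw [hcancel, one_mul]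
end

section
/- Let 𝓟 be the generalized crested product of Markov chains (P_i)_{i∈I} on X = ∏_{i∈I} X_i associated with a finite poset (I,⪯). For each i ∈ I, let 𝓛^i be a partition of X_i such that P_i is lumpable with respect to 𝓛^i. Then 𝓟 is lumpable with respect to the product partition 𝓛 = ∏_{i∈I} 𝓛^i of X, whose parts are the products ∏_{i∈I} L^i_{t_i} with L^i_{t_i} ∈ 𝓛^i. -/
open scoped Classical

/-- Let `𝓟` be the generalized crested product of the chains `P i`.  If, for each
`i ∈ I`, `𝓛^i` is a partition of `X i` with respect to which `P i` is lumpable, then `𝓟` is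
lumpable with respect to the product partition `𝓛 = ∏ i, 𝓛^i`, whose parts are the products
`∏ i, L^i_{t i}`. -/
theorem stmt_9 {I : Type*} [Fintype I] [PartialOrder I]
    (X : I → Type*) [∀ i, Fintype (X i)]
    (hX : ∀ i, 2 ≤ Fintype.card (X i))
    (p0 : I → ℝ) (hp0_pos : ∀ i, 0 < p0 i) (hp0_sum : ∑ i, p0 i = 1)
    (P : ∀ i, X i → X i → ℝ)
    (hP_nonneg : ∀ i, ∀ a b : X i, 0 ≤ P i a b)
    (hP_row : ∀ i, ∀ a : X i, ∑ b, P i a b = 1)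
    (k : I → ℕ) (L : ∀ i, Fin (k i) → Finset (X i))
    (hL_nonempty : ∀ i, ∀ t, (L i t).Nonempty)
    (hL_part : ∀ i, ∀ a : X i, ∃! t, a ∈ L i t)
    (hL_lump : ∀ i, ∀ t t' : Fin (k i), ∀ a ∈ L i t, ∀ a' ∈ L i t,
        ∑ b ∈ L i t', P i a b = ∑ b ∈ L i t', P i a' b) :
    ∀ t t' : ∀ i, Fin (k i), ∀ x x' : ∀ i, X i,
      (∀ i, x i ∈ L i (t i)) → (∀ i, x' i ∈ L i (t i)) →
      ∑ y ∈ Finset.univ.filter (fun y : ∀ i, X i => ∀ i, y i ∈ L i (t' i)),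
          crestedProduct X p0 P x y
      = ∑ y ∈ Finset.univ.filter (fun y : ∀ i, X i => ∀ i, y i ∈ L i (t' i)),
          crestedProduct X p0 P x' y := by

  intro t t' x x' hx hx'
  classical
  have hset : (Finset.univ.filter (fun y : ∀ i, X i => ∀ i, y i ∈ L i (t' i)))
      = Fintype.piFinset (fun i => L i (t' i)) := by
    ext y; simp [Fintype.mem_piFinset]
  rw [hset]
  have key : ∀ (z : ∀ i, X i),
      ∑ y ∈ Fintype.piFinset (fun i => L i (t' i)), crestedProduct X p0 P z y
      = ∑ i, p0 i * ∏ j, ∑ b ∈ L j (t' j),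
          (if hj : j = i then P i (z i) (hj ▸ b)
           else if j < i then 1 / (Fintype.card (X j) : ℝ)
           else if z j = b then (1:ℝ) else 0) := by
    intro z
    unfold crestedProduct
    rw [Finset.sum_comm]
    refine Finset.sum_congr rfl fun i _ => ?_
    rw [Finset.prod_univ_sum, Finset.mul_sum]
    refine Finset.sum_congr rfl fun y _ => ?_
    have hprod : (∏ j, (if hj : j = i then P i (z i) (hj ▸ y j)
           else if j < i then 1 / (Fintype.card (X j) : ℝ)
           else if z j = y j then (1:ℝ) else 0))
        = P i (z i) (y i)
          * (∏ j ∈ Finset.univ.filter (fun j => j < i), (1 / (Fintype.card (X j) : ℝ)))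
          * ∏ j ∈ Finset.univ.filter (fun j => ¬ j ≤ i), (if z j = y j then (1:ℝ) else 0) := by
      rw [← Finset.prod_filter_mul_prod_filter_not Finset.univ (fun j => j ≤ i)]
      have h1 : Finset.univ.filter (fun j => j ≤ i)
          = insert i (Finset.univ.filter (fun j => j < i)) := by
        ext j
        simp only [Finset.mem_filter, Finset.mem_univ, true_and, Finset.mem_insert]
        constructor
        · intro h; rcases eq_or_lt_of_le h with h | h
          · exact Or.inl h
          · exact Or.inr (by simpa using h)
        · rintro (rfl | h); · exact le_rfl
          · exact le_of_lt (by simpa using h)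
      rw [h1, Finset.prod_insert (by simp)]
      congr 1
      · congr 1
        · simp
        · refine Finset.prod_congr rfl fun j hj => ?_
          simp only [Finset.mem_filter, Finset.mem_univ, true_and] at hj
          rw [dif_neg (ne_of_lt hj), if_pos hj]
      · refine Finset.prod_congr rfl fun j hj => ?_
        simp only [Finset.mem_filter, Finset.mem_univ, true_and] at hj
        rw [dif_neg (fun h => hj (le_of_eq h)), if_neg (fun h => hj (le_of_lt h))]
    rw [hprod]; ring
  rw [key x, key x']
  refine Finset.sum_congr rfl fun i _ => ?_
  congr 1
  refine Finset.prod_congr rfl fun j _ => ?_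
  by_cases hj : j = i
  · subst hj
    simp only [dif_pos rfl]
    exact hL_lump j (t j) (t' j) (x j) (hx j) (x' j) (hx' j)
  · simp only [dif_neg hj]
    by_cases hlt : j < i
    · simp [hlt]
    · simp only [if_neg hlt]
      have hmem : ∀ (w : ∀ i, X i), (∀ i, w i ∈ L i (t i)) →
          (∑ b ∈ L j (t' j), if w j = b then (1:ℝ) else 0)
          = if t' j = t j then (1:ℝ) else 0 := by
        intro w hw
        rw [Finset.sum_ite_eq (L j (t' j)) (w j) (fun _ => (1:ℝ))]
        obtain ⟨u, hu, huniq⟩ := hL_part j (w j)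
        by_cases h : t' j = t j
        · rw [if_pos h, if_pos (h ▸ hw j)]
        · rw [if_neg h, if_neg]
          intro hmem
          exact h ((huniq _ hmem).trans (huniq _ (hw j)).symm)
      rw [hmem x hx, hmem x' hx']
end

section
/- Let (I,⪯) be a finite poset with |I| = n and let X be a finite set. For x, y ∈ X^n (with coordinates indexed by I), define d_I(x,y) = n − max{|A| : A ⊆ I ancestral and x_i = y_i for all i ∈ A}. Then d_I is a distance on X^n: d_I(x,y) ≥ 0 with equality iff x = y, d_I(x,y) = d_I(y,x), and d_I(x,z) ≤ d_I(x,y) + d_I(y,z) for all x, y, z ∈ X^n. -/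
/-
Let `m(x, y)` be the largest size of an ancestral set on which `x` and `y` agree, so that
`d_I(x, y) = n - m(x, y)`. Ancestral sets are closed under intersection, so if `A` realises
`m(x, y)` and `B` realises `m(y, z)`, then `x` and `z` agree on the ancestral set `A ∩ B`, and
`|A ∩ B| ≥ |A| + |B| - n` gives the triangle inequality. Since `I` itself is ancestral,
`m(x, y) = n` exactly when `x = y`.
-/

open scoped Classical

/-- A subset `A` of a poset `I` is ancestral if `j ∈ A` and `j ⪯ i` imply `i ∈ A`. -/
def IsAncestral {I : Type*} [PartialOrder I] (A : Finset I) : Prop :=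
  ∀ i j : I, j ∈ A → j ≤ i → i ∈ A

/-- `dPoset x y = n − max{|A| : A ⊆ I ancestral, x i = y i for all i ∈ A}`,
where `n = |I|`. -/
noncomputable def dPoset {I : Type*} [Fintype I] [PartialOrder I] {X : Type*}
    (x y : I → X) : ℕ :=
  Fintype.card I -
    ((Finset.univ : Finset (Finset I)).filter
        (fun A => IsAncestral A ∧ ∀ i ∈ A, x i = y i)).sup Finset.card

open Finset

namespace IsAncestral

variable {I : Type*} [PartialOrder I]

theorem empty : IsAncestral (∅ : Finset I) := fun _ _ h _ => absurd h (notMem_empty _)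

theorem univ [Fintype I] : IsAncestral (Finset.univ : Finset I) := fun _ _ _ _ => mem_univ _

theorem inter {A B : Finset I} (hA : IsAncestral A) (hB : IsAncestral B) :
    IsAncestral (A ∩ B) := fun i j hj hji =>
  mem_inter.2 ⟨hA i j (mem_inter.1 hj).1 hji, hB i j (mem_inter.1 hj).2 hji⟩

end IsAncestral

section MaxAgree

variable {I : Type*} [Fintype I] [PartialOrder I] {X : Type*}

noncomputable def maxAgree (x y : I → X) : ℕ :=
  ((Finset.univ : Finset (Finset I)).filter
    (fun A => IsAncestral A ∧ ∀ i ∈ A, x i = y i)).sup Finset.card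

theorem dPoset_eq_card_sub_maxAgree (x y : I → X) :
    dPoset x y = Fintype.card I - maxAgree x y := rfl

theorem card_le_maxAgree {x y : I → X} {A : Finset I} (hA : IsAncestral A)
    (hxy : ∀ i ∈ A, x i = y i) : #A ≤ maxAgree x y :=
  le_sup (mem_filter.2 ⟨mem_univ _, hA, hxy⟩)

theorem exists_card_eq_maxAgree (x y : I → X) :
    ∃ A : Finset I, IsAncestral A ∧ (∀ i ∈ A, x i = y i) ∧ #A = maxAgree x y := by
  have hne : ((Finset.univ : Finset (Finset I)).filter
      (fun A => IsAncestral A ∧ ∀ i ∈ A, x i = y i)).Nonempty :=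
    ⟨∅, mem_filter.2 ⟨mem_univ _, IsAncestral.empty, fun _ h => absurd h (notMem_empty _)⟩⟩
  obtain ⟨A, hA, hsup⟩ := exists_mem_eq_sup _ hne Finset.card
  obtain ⟨-, hanc, hxy⟩ := mem_filter.1 hA
  exact ⟨A, hanc, hxy, hsup.symm⟩

theorem maxAgree_le_card (x y : I → X) : maxAgree x y ≤ Fintype.card I := by
  obtain ⟨A, -, -, hA⟩ := exists_card_eq_maxAgree x y
  exact hA ▸ card_le_univ A

theorem maxAgree_comm (x y : I → X) : maxAgree x y = maxAgree y x := by
  obtain ⟨A, hanc, hxy, hA⟩ := exists_card_eq_maxAgree x y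
  obtain ⟨B, hanc', hyx, hB⟩ := exists_card_eq_maxAgree y x
  exact le_antisymm (hA ▸ card_le_maxAgree hanc fun i hi => (hxy i hi).symm)
    (hB ▸ card_le_maxAgree hanc' fun i hi => (hyx i hi).symm)

theorem maxAgree_eq_card_iff {x y : I → X} : maxAgree x y = Fintype.card I ↔ x = y := by
  constructor
  · intro h
    obtain ⟨A, -, hxy, hA⟩ := exists_card_eq_maxAgree x y
    have hAuniv : A = Finset.univ := eq_univ_of_card A (hA.trans h)
    exact funext fun i => hxy i (hAuniv ▸ mem_univ i)
  · rintro rfl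
    exact le_antisymm (maxAgree_le_card x x)
      (card_univ (α := I) ▸ card_le_maxAgree IsAncestral.univ fun _ _ => rfl)

theorem maxAgree_add_maxAgree_le (x y z : I → X) :
    maxAgree x y + maxAgree y z ≤ Fintype.card I + maxAgree x z := by
  obtain ⟨A, hAanc, hxy, hA⟩ := exists_card_eq_maxAgree x y
  obtain ⟨B, hBanc, hyz, hB⟩ := exists_card_eq_maxAgree y z
  have hxz : #(A ∩ B) ≤ maxAgree x z := card_le_maxAgree (hAanc.inter hBanc) fun i hi =>
    (hxy i (mem_inter.1 hi).1).trans (hyz i (mem_inter.1 hi).2)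
  have hunion : #(A ∪ B) ≤ Fintype.card I := card_le_univ _
  have := card_inter_add_card_union A B
  omega

end MaxAgree

section DPoset

variable {I : Type*} [Fintype I] [PartialOrder I] {X : Type*}

theorem dPoset_eq_zero_iff {x y : I → X} : dPoset x y = 0 ↔ x = y := by
  rw [dPoset_eq_card_sub_maxAgree, Nat.sub_eq_zero_iff_le, ← maxAgree_eq_card_iff]
  exact ⟨fun h => le_antisymm (maxAgree_le_card x y) h, Eq.ge⟩

theorem dPoset_comm (x y : I → X) : dPoset x y = dPoset y x := by
  rw [dPoset_eq_card_sub_maxAgree, dPoset_eq_card_sub_maxAgree, maxAgree_comm]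

theorem dPoset_triangle (x y z : I → X) : dPoset x z ≤ dPoset x y + dPoset y z := by
  simp only [dPoset_eq_card_sub_maxAgree]
  have := maxAgree_add_maxAgree_le x y z
  have := maxAgree_le_card x y
  have := maxAgree_le_card y z
  omega

end DPoset

theorem stmt_11_general {I : Type*} [Fintype I] [PartialOrder I]
    {X : Type*} :
    ∀ x y z : I → X,
      0 ≤ dPoset x y ∧
      (dPoset x y = 0 ↔ x = y) ∧
      dPoset x y = dPoset y x ∧
      dPoset x z ≤ dPoset x y + dPoset y z :=
  fun x y z => ⟨Nat.zero_le _, dPoset_eq_zero_iff, dPoset_comm x y, dPoset_triangle x y z⟩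

/-- `dPoset` is a distance on `X^n` (coordinates indexed by the finite poset `I`,
`n = |I|`): it is nonnegative, vanishes exactly on the diagonal, is symmetric, and satisfies
the triangle inequality. -/
theorem stmt_11 {I : Type*} [Fintype I] [PartialOrder I]
    {X : Type*} [Fintype X] :
    ∀ x y z : I → X,
      0 ≤ dPoset x y ∧
      (dPoset x y = 0 ↔ x = y) ∧
      dPoset x y = dPoset y x ∧
      dPoset x z ≤ dPoset x y + dPoset y z :=
  stmt_11_general
end

section
/- Let 𝓛 = {L_1,…,L_k} be a partition of X^n that is a lumping of the Insect Markov chain on X^n (the boundary of the q-ary rooted tree of depth n). If x_0 and y_0 belong to the same part L_r of 𝓛, then λ_{i,s}(x_0) = λ_{i,s}(y_0) for every i = 0,…,n and s = 1,…,k, where λ_{i,s}(x_0) = |{x ∈ X^n : d(x_0,x) = i and x ∈ L_s}|. -/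
open scoped Classical

/-- The ultrametric distance on `X^n`:
`d(x,y) = n − max{m ∈ {0,…,n} : x 0 = y 0, …, x (m-1) = y (m-1)}`. -/
noncomputable def treeDist {X : Type*} {n : ℕ} (x y : Fin n → X) : ℕ :=
  n - ((Finset.range (n + 1)).filter
        (fun m => ∀ i : Fin n, (i : ℕ) < m → x i = y i)).sup id

/-- The coefficients of the Insect Markov chain on the `q`-ary rooted tree of depth `n`:
`α_0 = 1`, `α_j = (q^j − 1)/(q^{j+1} − 1)` for `1 ≤ j ≤ n−1`, and `α_n = 0`. -/
noncomputable def insectAlpha (q n : ℕ) (j : ℕ) : ℝ :=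
  if j = 0 then 1
  else if j ≤ n - 1 then ((q : ℝ) ^ j - 1) / ((q : ℝ) ^ (j + 1) - 1)
  else 0

/-- The transition probabilities of the Insect Markov chain on `X^n` (`q = |X|`):
`p(x,y) = ∑_{i = max(d(x,y),1)}^{n} q^{−i} · α_1⋯α_{i−1} · (1 − α_i)`. -/
noncomputable def insectP {X : Type*} [Fintype X] {n : ℕ} (x y : Fin n → X) : ℝ :=
  ∑ i ∈ Finset.Icc (max (treeDist x y) 1) n,
    (1 / (Fintype.card X : ℝ) ^ i)
      * (∏ t ∈ Finset.Ico 1 i, insectAlpha (Fintype.card X) n t)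
      * (1 - insectAlpha (Fintype.card X) n i)

namespace Stmt12Aux

variable {X : Type*} {n : ℕ}

lemma treeDist_le_iff (x y : Fin n → X) (j : ℕ) :
    treeDist x y ≤ j ↔ ∀ i : Fin n, (i : ℕ) < n - j → x i = y i := by
  unfold treeDist
  set s := (Finset.range (n + 1)).filter
      (fun m => ∀ i : Fin n, (i : ℕ) < m → x i = y i) with hs
  have h0 : 0 ∈ s := by simp [hs]
  constructor
  · intro h i hi
    obtain ⟨m, hm, hsup⟩ := Finset.exists_mem_eq_sup s ⟨0, h0⟩ id
    have hcond := (Finset.mem_filter.mp hm).2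
    apply hcond
    simp only [id] at hsup
    omega
  · intro h
    have hmem : (n - j) ∈ s := by
      refine Finset.mem_filter.mpr ⟨Finset.mem_range.mpr (by omega), ?_⟩
      exact fun i hi => h i hi
    have := Finset.le_sup (f := id) hmem
    simp only [id] at this
    omega

lemma treeDist_comm (x y : Fin n → X) : treeDist x y = treeDist y x := by
  unfold treeDist
  congr 2
  ext m
  simp only [Finset.mem_filter]
  exact and_congr_right fun _ =>
    ⟨fun h i hi => (h i hi).symm, fun h i hi => (h i hi).symm⟩

lemma treeDist_le_trans {x y z : Fin n → X} {j : ℕ}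
    (h1 : treeDist x y ≤ j) (h2 : treeDist y z ≤ j) : treeDist x z ≤ j := by
  rw [treeDist_le_iff] at h1 h2 ⊢
  exact fun i hi => (h1 i hi).trans (h2 i hi)

lemma treeDist_le_zero_iff (x y : Fin n → X) : treeDist x y ≤ 0 ↔ x = y := by
  rw [treeDist_le_iff]
  constructor
  · intro h; funext i; exact h i (by omega)
  · rintro rfl i _; rfl

lemma treeDist_le_of_le {x y : Fin n → X} {i j : ℕ} (hij : i ≤ j)
    (h : treeDist x y ≤ i) : treeDist x y ≤ j := le_trans h hij

lemma treeDist_le_of_ge {x y : Fin n → X} {j : ℕ} (hj : n ≤ j) :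
    treeDist x y ≤ j := by
  rw [treeDist_le_iff]
  intro i hi; omega

noncomputable def ballB {X : Type*} [Fintype X] {n : ℕ} (x : Fin n → X) (j : ℕ) :
    Finset (Fin n → X) :=
  Finset.univ.filter (fun y => treeDist x y ≤ j)

lemma mem_ballB [Fintype X] {x y : Fin n → X} {j : ℕ} :
    y ∈ ballB x j ↔ treeDist x y ≤ j := by simp [ballB]

lemma card_ballB [Fintype X] {j : ℕ} (hj : j ≤ n) (x : Fin n → X) :
    (ballB x j).card = Fintype.card X ^ j := by
  have key : (ballB x j).card = (Finset.univ : Finset (Fin j → X)).card := by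
    apply Finset.card_bij'
      (fun y _ => fun t : Fin j => y ⟨n - j + t, by have := t.isLt; omega⟩)
      (fun g _ => fun i : Fin n =>
        if h : (i : ℕ) < n - j then x i else g ⟨(i : ℕ) - (n - j), by have := i.isLt; omega⟩)
    · intro y hy
      funext i
      by_cases h : (i : ℕ) < n - j
      · simp only [dif_pos h]
        exact (treeDist_le_iff x y j).mp (mem_ballB.mp hy) i h
      · simp only [dif_neg h]
        congr 1
        apply Fin.ext
        simp only []
        omega
    · intro g _
      funext t
      have h : ¬ ((⟨n - j + (t : ℕ), by have := t.isLt; omega⟩ : Fin n) : ℕ) < n - j := by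
        simp only []; omega
      simp only [dif_neg h]
      congr 1
      apply Fin.ext
      simp only []
      omega
    · intros; exact Finset.mem_univ _
    · intro g _
      rw [mem_ballB, treeDist_le_iff]
      intro i hi
      simp [dif_pos hi]
  rw [key]
  simp

noncomputable def wI (q n : ℕ) (i : ℕ) : ℝ :=
  (∏ t ∈ Finset.Ico 1 i, insectAlpha q n t) * (1 - insectAlpha q n i)

noncomputable def WS (q n : ℕ) (i : ℕ) : ℝ := ∑ t ∈ Finset.Icc 1 i, wI q n t

lemma one_lt_cast_pow {q t : ℕ} (hq : 2 ≤ q) (ht : t ≠ 0) : 1 < (q : ℝ) ^ t := by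
  have : (2 : ℝ) ≤ (q : ℝ) := by exact_mod_cast hq
  calc (1:ℝ) < 2 ^ t := by
        apply one_lt_pow₀ (by norm_num) ht
    _ ≤ (q:ℝ) ^ t := by
        apply pow_le_pow_left₀ (by norm_num) this

lemma insectAlpha_pos {q n t : ℕ} (hq : 2 ≤ q) (h1 : 1 ≤ t) (h2 : t ≤ n - 1) :
    0 < insectAlpha q n t := by
  unfold insectAlpha
  rw [if_neg (by omega), if_pos h2]
  apply div_pos <;> · rw [sub_pos]; exact one_lt_cast_pow hq (by omega)

lemma insectAlpha_lt_one {q n t : ℕ} (hq : 2 ≤ q) (h1 : 1 ≤ t) :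
    insectAlpha q n t < 1 := by
  unfold insectAlpha
  rw [if_neg (by omega)]
  split
  · rw [div_lt_one (by rw [sub_pos]; exact one_lt_cast_pow hq (by omega))]
    have : (q:ℝ) ^ t < (q:ℝ) ^ (t+1) := by
      apply pow_lt_pow_right₀
      · exact_mod_cast (by omega : (1:ℕ) < q)
      · omega
    linarith
  · norm_num

lemma wI_pos {q n i : ℕ} (hq : 2 ≤ q) (h1 : 1 ≤ i) (h2 : i ≤ n) : 0 < wI q n i := by
  unfold wI
  apply mul_pos
  · apply Finset.prod_pos
    intro t ht
    rw [Finset.mem_Ico] at ht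
    exact insectAlpha_pos hq ht.1 (by omega)
  · rw [sub_pos]
    exact insectAlpha_lt_one hq h1

lemma WS_zero (q n : ℕ) : WS q n 0 = 0 := by simp [WS]

lemma WS_succ (q n i : ℕ) : WS q n (i + 1) = WS q n i + wI q n (i + 1) := by
  unfold WS
  exact Finset.sum_Icc_succ_top (by omega) _

lemma wI_eq_WS_sub {q n : ℕ} {i : ℕ} (hi : 1 ≤ i) :
    wI q n i = WS q n i - WS q n (i - 1) := by
  cases i with
  | zero => omega
  | succ i' =>
    simp only [Nat.add_sub_cancel]
    rw [WS_succ]; ring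

lemma WS_lt {q n a b : ℕ} (hq : 2 ≤ q) (hab : a < b) (hb : b ≤ n) :
    WS q n a < WS q n b := by
  have key : WS q n a + ∑ t ∈ Finset.Ioc a b, wI q n t = WS q n b := by
    unfold WS
    have hIcc : ∀ c : ℕ, Finset.Icc 1 c = Finset.Ioc 0 c := fun c => by
      ext t; simp [Finset.mem_Icc, Finset.mem_Ioc]; omega
    rw [hIcc a, hIcc b]
    exact Finset.sum_Ioc_consecutive _ (by omega) (by omega)
  have hpos : 0 < ∑ t ∈ Finset.Ioc a b, wI q n t := by
    apply Finset.sum_pos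
    · intro t ht
      rw [Finset.mem_Ioc] at ht
      exact wI_pos hq (by omega) (by omega)
    · exact ⟨b, by rw [Finset.mem_Ioc]; omega⟩
  linarith

variable [Fintype X] {k : ℕ}

lemma card_ballB_filter {i j : ℕ} (hi : i ≤ n) (hj : j ≤ n) (x z : Fin n → X) :
    ((ballB x i).filter (fun y => treeDist y z ≤ j)).card
      = if treeDist x z ≤ max i j then Fintype.card X ^ (min i j) else 0 := by
  rcases le_total i j with hij | hij
  · rw [max_eq_right hij, min_eq_left hij]
    by_cases h : treeDist x z ≤ j
    · rw [if_pos h]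
      have heq : (ballB x i).filter (fun y => treeDist y z ≤ j) = ballB x i := by
        apply Finset.filter_true_of_mem
        intro y hy
        have h1 : treeDist y x ≤ j := by
          rw [treeDist_comm]; exact le_trans (mem_ballB.mp hy) hij
        exact treeDist_le_trans h1 h
      rw [heq, card_ballB hi]
    · rw [if_neg h, Finset.card_eq_zero]
      apply Finset.filter_false_of_mem
      intro y hy hyz
      exact h (treeDist_le_trans (le_trans (mem_ballB.mp hy) hij) hyz)
  · rw [max_eq_left hij, min_eq_right hij]
    by_cases h : treeDist x z ≤ i
    · rw [if_pos h]
      have heq : (ballB x i).filter (fun y => treeDist y z ≤ j) = ballB z j := by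
        ext y
        simp only [Finset.mem_filter, mem_ballB]
        constructor
        · rintro ⟨-, h2⟩
          rw [treeDist_comm]; exact h2
        · intro h2
          have h2' : treeDist y z ≤ j := by rw [treeDist_comm]; exact h2
          exact ⟨treeDist_le_trans h (le_trans h2 hij), h2'⟩
      rw [heq, card_ballB hj]
    · rw [if_neg h, Finset.card_eq_zero]
      apply Finset.filter_false_of_mem
      intro y hy hyz
      exact h (treeDist_le_trans (mem_ballB.mp hy) (le_trans hyz hij))

noncomputable def betaN (L : Fin k → Finset (Fin n → X)) (x : Fin n → X) (i : ℕ)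
    (s : Fin k) : ℕ :=
  ((L s).filter (fun z => treeDist x z ≤ i)).card

lemma sum_betaN_ball (L : Fin k → Finset (Fin n → X)) {i j : ℕ} (hi : i ≤ n) (hj : j ≤ n)
    (x : Fin n → X) (s : Fin k) :
    ∑ y ∈ ballB x i, betaN L y j s
      = Fintype.card X ^ (min i j) * betaN L x (max i j) s := by
  unfold betaN
  simp_rw [Finset.card_filter]
  rw [Finset.sum_comm]
  have hswap : ∀ z, ∑ y ∈ ballB x i, (if treeDist y z ≤ j then 1 else 0)
      = ((ballB x i).filter (fun y => treeDist y z ≤ j)).card :=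
    fun z => (Finset.card_filter _ _).symm
  simp_rw [hswap, card_ballB_filter hi hj]
  rw [← Finset.sum_filter, Finset.sum_const, smul_eq_mul, mul_comm]
  congr 1
  exact Finset.card_filter _ _

lemma insectP_eq (x y : Fin n → X) :
    insectP x y = ∑ i ∈ Finset.Icc 1 n,
      if treeDist x y ≤ i then wI (Fintype.card X) n i / (Fintype.card X : ℝ) ^ i
      else 0 := by
  unfold insectP
  have hset : Finset.Icc (max (treeDist x y) 1) n
      = (Finset.Icc 1 n).filter (fun i => treeDist x y ≤ i) := by
    ext i
    simp only [Finset.mem_Icc, Finset.mem_filter]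
    omega
  rw [hset, Finset.sum_filter]
  apply Finset.sum_congr rfl
  intro i _
  split
  · unfold wI; ring
  · rfl

lemma sum_insectP_eq (L0 : Finset (Fin n → X)) (x : Fin n → X) :
    ∑ y ∈ L0, insectP x y
      = ∑ i ∈ Finset.Icc 1 n, (wI (Fintype.card X) n i / (Fintype.card X : ℝ) ^ i)
          * ((L0.filter (fun z => treeDist x z ≤ i)).card : ℝ) := by
  simp_rw [insectP_eq]
  rw [Finset.sum_comm]
  apply Finset.sum_congr rfl
  intro i _
  rw [← Finset.sum_filter, Finset.sum_const, nsmul_eq_mul, mul_comm]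

lemma sum_insectP_mul (L : Fin k → Finset (Fin n → X)) {j : ℕ} (hj : j ≤ n)
    (x : Fin n → X) (s : Fin k) :
    ∑ y, insectP x y * (betaN L y j s : ℝ)
      = ∑ i ∈ Finset.Icc 1 n, (wI (Fintype.card X) n i / (Fintype.card X : ℝ) ^ i)
          * ((Fintype.card X : ℝ) ^ (min i j) * (betaN L x (max i j) s : ℝ)) := by
  simp_rw [insectP_eq, Finset.sum_mul]
  rw [Finset.sum_comm]
  apply Finset.sum_congr rfl
  intro i hi
  have hi' : i ≤ n := (Finset.mem_Icc.mp hi).2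
  simp_rw [ite_mul, zero_mul]
  rw [← Finset.sum_filter]
  have hball : Finset.univ.filter (fun y => treeDist x y ≤ i) = ballB x i := rfl
  rw [hball, ← Finset.mul_sum, ← Nat.cast_sum, sum_betaN_ball L hi' hj]
  push_cast
  ring


lemma telescope_WS (q n m a : ℕ) (hm : 1 ≤ m) :
    ∑ j ∈ Finset.Icc 1 a, (WS q n j ^ m - WS q n (j - 1) ^ m) = WS q n a ^ m := by
  induction a with
  | zero => simp [WS_zero, zero_pow (by omega : m ≠ 0)]
  | succ a ih =>
    rw [Finset.sum_Icc_succ_top (by omega), ih]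
    simp only [Nat.add_sub_cancel]
    ring

lemma regroup {q : ℕ} (hq : 2 ≤ q) {n : ℕ} (m : ℕ) (hm : 1 ≤ m) (B : ℕ → ℝ) :
    ∑ j ∈ Finset.Icc 1 n, ((WS q n j ^ m - WS q n (j - 1) ^ m) / (q : ℝ) ^ j)
        * (∑ i ∈ Finset.Icc 1 n,
            (wI q n i / (q : ℝ) ^ i) * ((q : ℝ) ^ (min i j) * B (max i j)))
      = ∑ l ∈ Finset.Icc 1 n,
          ((WS q n l ^ (m + 1) - WS q n (l - 1) ^ (m + 1)) / (q : ℝ) ^ l) * B l := by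
  have hQ : (0 : ℝ) < (q : ℝ) := by
    have h : 0 < q := by omega
    exact_mod_cast h
  have hQne : ∀ t : ℕ, ((q : ℝ)) ^ t ≠ 0 := fun t => pow_ne_zero t (ne_of_gt hQ)
  have hIcc : ∀ c : ℕ, Finset.Icc 1 c = Finset.Ioc 0 c := fun c => by
    ext t; simp only [Finset.mem_Icc, Finset.mem_Ioc]; omega
  calc
    ∑ j ∈ Finset.Icc 1 n, ((WS q n j ^ m - WS q n (j - 1) ^ m) / (q : ℝ) ^ j)
        * (∑ i ∈ Finset.Icc 1 n,
            (wI q n i / (q : ℝ) ^ i) * ((q : ℝ) ^ (min i j) * B (max i j)))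
      = ∑ j ∈ Finset.Icc 1 n,
          (((WS q n j ^ m - WS q n (j - 1) ^ m) / (q : ℝ) ^ j) * (WS q n j * B j)
          + ∑ i ∈ Finset.Ioc j n,
              (WS q n j ^ m - WS q n (j - 1) ^ m) * ((wI q n i / (q : ℝ) ^ i) * B i)) := ?_
    _ = (∑ j ∈ Finset.Icc 1 n,
          ((WS q n j ^ m - WS q n (j - 1) ^ m) / (q : ℝ) ^ j) * (WS q n j * B j))
        + ∑ i ∈ Finset.Icc 1 n,
            (wI q n i / (q : ℝ) ^ i) * B i * WS q n (i - 1) ^ m := ?_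
    _ = ∑ l ∈ Finset.Icc 1 n,
          ((WS q n l ^ (m + 1) - WS q n (l - 1) ^ (m + 1)) / (q : ℝ) ^ l) * B l := ?_
  · apply Finset.sum_congr rfl
    intro j hj
    rw [Finset.mem_Icc] at hj
    have hinner : (∑ i ∈ Finset.Icc 1 n,
        (wI q n i / (q : ℝ) ^ i) * ((q : ℝ) ^ (min i j) * B (max i j)))
        = WS q n j * B j + ∑ i ∈ Finset.Ioc j n,
            (wI q n i / (q : ℝ) ^ i) * ((q : ℝ) ^ j * B i) := by
      rw [hIcc n, ← Finset.sum_Ioc_consecutive _ (Nat.zero_le j) hj.2, ← hIcc j]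
      congr 1
      · rw [WS, Finset.sum_mul]
        apply Finset.sum_congr rfl
        intro i hi
        rw [Finset.mem_Icc] at hi
        rw [min_eq_left hi.2, max_eq_right hi.2]
        have h := hQne i
        field_simp
      · apply Finset.sum_congr rfl
        intro i hi
        rw [Finset.mem_Ioc] at hi
        rw [min_eq_right hi.1.le, max_eq_left hi.1.le]
    rw [hinner, mul_add, Finset.mul_sum]
    congr 1
    apply Finset.sum_congr rfl
    intro i hi
    have h1 := hQne i
    have h2 := hQne j
    field_simp
  · rw [Finset.sum_add_distrib]
    congr 1
    rw [Finset.sum_comm' (s := Finset.Icc 1 n) (t := fun j => Finset.Ioc j n)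
        (t' := Finset.Icc 1 n) (s' := fun i => Finset.Icc 1 (i - 1))
        (by intro a b
            simp only [Finset.mem_Icc, Finset.mem_Ioc]
            omega)]
    apply Finset.sum_congr rfl
    intro i hi
    rw [← Finset.sum_mul, telescope_WS q n m (i - 1) hm]
    ring
  · rw [← Finset.sum_add_distrib]
    apply Finset.sum_congr rfl
    intro l hl
    rw [Finset.mem_Icc] at hl
    rw [wI_eq_WS_sub hl.1]
    have h := hQne l
    field_simp
    ring

noncomputable def gIter (L : Fin k → Finset (Fin n → X)) :
    ℕ → (Fin n → X) → Fin k → ℝ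
  | 0 => fun x s => if x ∈ L s then 1 else 0
  | (m + 1) => fun x s => ∑ y, insectP x y * gIter L m y s

lemma gIter_succ (L : Fin k → Finset (Fin n → X)) (m : ℕ) (x : Fin n → X) (s : Fin k) :
    gIter L (m + 1) x s = ∑ y, insectP x y * gIter L m y s := rfl

lemma gIter_one (L : Fin k → Finset (Fin n → X)) (x : Fin n → X) (s : Fin k) :
    gIter L 1 x s = ∑ y ∈ L s, insectP x y := by
  rw [gIter_succ]
  have h : ∀ y : Fin n → X, insectP x y * gIter L 0 y s
      = if y ∈ L s then insectP x y else 0 := by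
    intro y
    show insectP x y * (if y ∈ L s then (1:ℝ) else 0) = _
    split <;> simp
  simp_rw [h]
  rw [Finset.sum_ite_mem, Finset.univ_inter]

lemma gIter_formula (hq : 2 ≤ Fintype.card X) (L : Fin k → Finset (Fin n → X)) :
    ∀ m, 1 ≤ m → ∀ (x : Fin n → X) (s : Fin k), gIter L m x s
      = ∑ i ∈ Finset.Icc 1 n,
          ((WS (Fintype.card X) n i ^ m - WS (Fintype.card X) n (i - 1) ^ m)
            / (Fintype.card X : ℝ) ^ i) * (betaN L x i s : ℝ) := by
  intro m hm
  induction m, hm using Nat.le_induction with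
  | base =>
    intro x s
    rw [gIter_one, sum_insectP_eq]
    apply Finset.sum_congr rfl
    intro i hi
    rw [Finset.mem_Icc] at hi
    rw [pow_one, pow_one, ← wI_eq_WS_sub hi.1]
    rfl
  | succ m hm ih =>
    intro x s
    rw [gIter_succ]
    have h1 : ∑ y, insectP x y * gIter L m y s
        = ∑ j ∈ Finset.Icc 1 n,
            ((WS (Fintype.card X) n j ^ m - WS (Fintype.card X) n (j - 1) ^ m)
              / (Fintype.card X : ℝ) ^ j)
            * ∑ y, insectP x y * (betaN L y j s : ℝ) := by
      simp_rw [ih, Finset.mul_sum]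
      rw [Finset.sum_comm]
      apply Finset.sum_congr rfl
      intro j hj
      apply Finset.sum_congr rfl
      intro y _
      ring
    rw [h1]
    rw [Finset.sum_congr rfl (fun j hj => by
      rw [sum_insectP_mul L (Finset.mem_Icc.mp hj).2 x s])]
    exact regroup hq m hm (fun l => (betaN L x l s : ℝ))

lemma gIter_const (L : Fin k → Finset (Fin n → X))
    (hL_nonempty : ∀ s, (L s).Nonempty)
    (hL_part : ∀ x : Fin n → X, ∃! s, x ∈ L s)
    (hlump : ∀ r s : Fin k, ∀ x ∈ L r, ∀ x' ∈ L r,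
        ∑ y ∈ L s, insectP x y = ∑ y ∈ L s, insectP x' y) :
    ∀ m, 1 ≤ m → ∀ (r : Fin k) (x x' : Fin n → X), x ∈ L r → x' ∈ L r →
      ∀ s, gIter L m x s = gIter L m x' s := by
  have hpartition : ∀ f : (Fin n → X) → ℝ, ∑ y, f y = ∑ t, ∑ y ∈ L t, f y := by
    intro f
    rw [← Finset.sum_fiberwise Finset.univ (fun y => (hL_part y).choose) f]
    apply Finset.sum_congr rfl
    intro t _
    apply Finset.sum_congr _ (fun _ _ => rfl)
    ext y
    simp only [Finset.mem_filter, Finset.mem_univ, true_and]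
    constructor
    · rintro rfl
      exact (hL_part y).choose_spec.1
    · intro hy
      exact ((hL_part y).choose_spec.2 t hy).symm
  intro m hm
  induction m, hm using Nat.le_induction with
  | base =>
    intro r x x' hx hx' s
    rw [gIter_one, gIter_one]
    exact hlump r s x hx x' hx'
  | succ m hm ih =>
    intro r x x' hx hx' s
    rw [gIter_succ, gIter_succ, hpartition _, hpartition (fun y => insectP x' y * gIter L m y s)]
    apply Finset.sum_congr rfl
    intro t _
    have hrep := (hL_nonempty t).choose_spec
    calc ∑ y ∈ L t, insectP x y * gIter L m y s
        = ∑ y ∈ L t, insectP x y * gIter L m (hL_nonempty t).choose s := by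
          apply Finset.sum_congr rfl
          intro y hy
          rw [ih t y (hL_nonempty t).choose hy hrep s]
      _ = (∑ y ∈ L t, insectP x y) * gIter L m (hL_nonempty t).choose s := by
          rw [Finset.sum_mul]
      _ = (∑ y ∈ L t, insectP x' y) * gIter L m (hL_nonempty t).choose s := by
          rw [hlump r t x hx x' hx']
      _ = ∑ y ∈ L t, insectP x' y * gIter L m y s := by
          rw [Finset.sum_mul]
          apply Finset.sum_congr rfl
          intro y hy
          rw [ih t y (hL_nonempty t).choose hy hrep s]


lemma vandermonde_zero {N : ℕ} (v : Fin N → ℝ) (hv : StrictMono v) (hv0 : ∀ i, v i ≠ 0)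
    (d : Fin N → ℝ) (h : ∀ m : Fin N, ∑ i, v i ^ ((m : ℕ) + 1) * d i = 0) : d = 0 := by
  set A : Matrix (Fin N) (Fin N) ℝ := Matrix.of fun m i => v i ^ ((m : ℕ) + 1) with hA
  have hdet : A.det ≠ 0 := by
    have hAeq : A = Matrix.transpose (Matrix.vandermonde v) * Matrix.diagonal v := by
      ext i j
      rw [Matrix.mul_diagonal]
      simp [hA, Matrix.vandermonde, pow_succ]
    rw [hAeq, Matrix.det_mul, Matrix.det_transpose, Matrix.det_vandermonde,
        Matrix.det_diagonal]
    apply mul_ne_zero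
    · apply Finset.prod_ne_zero_iff.mpr
      intro i _
      apply Finset.prod_ne_zero_iff.mpr
      intro j hj
      rw [Finset.mem_Ioi] at hj
      exact sub_ne_zero_of_ne (ne_of_gt (hv hj))
    · exact Finset.prod_ne_zero_iff.mpr fun i _ => hv0 i
  have hmul : A.mulVec d = 0 := by
    funext m
    show ∑ i, A m i * d i = 0
    exact h m
  exact Matrix.eq_zero_of_mulVec_eq_zero hdet hmul

end Stmt12Aux

open Stmt12Aux

/-- Let `𝓛 = {L_1,…,L_k}` be a lumping of the Insect Markov chain on `X^n`.
If `x0` and `y0` belong to the same part `L r`, then for every `i` and every part `L s`,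
`λ_{i,s}(x0) = λ_{i,s}(y0)`, where `λ_{i,s}(x0) = |{x ∈ X^n : d(x0,x) = i ∧ x ∈ L s}|`. -/
theorem stmt_12 {X : Type*} [Fintype X] {n k : ℕ}
    (hq : 2 ≤ Fintype.card X) (hn : 1 ≤ n)
    (L : Fin k → Finset (Fin n → X))
    (hL_nonempty : ∀ s, (L s).Nonempty)
    (hL_part : ∀ x : Fin n → X, ∃! s, x ∈ L s)
    (hlump : ∀ r s : Fin k, ∀ x ∈ L r, ∀ x' ∈ L r,
        ∑ y ∈ L s, insectP x y = ∑ y ∈ L s, insectP x' y)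
    (r : Fin k) (x0 y0 : Fin n → X) (hx0 : x0 ∈ L r) (hy0 : y0 ∈ L r) :
    ∀ (i : ℕ) (s : Fin k),
      ((L s).filter (fun x => treeDist x0 x = i)).card
      = ((L s).filter (fun x => treeDist y0 x = i)).card := by
  set q := Fintype.card X with hqdef
  have hQne : ∀ t : ℕ, ((q : ℝ)) ^ t ≠ 0 := by
    intro t
    apply pow_ne_zero
    have h : 0 < q := by omega
    exact_mod_cast ne_of_gt h
  have hbig : ∀ (x : Fin n → X) (j : ℕ) (s : Fin k), n ≤ j →
      betaN L x j s = (L s).card := by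
    intro x j s hj
    unfold betaN
    rw [Finset.filter_true_of_mem]
    intro z _
    exact treeDist_le_of_ge hj
  -- the key claim: beta values agree
  have hbeta : ∀ (j : ℕ) (s : Fin k), betaN L x0 j s = betaN L y0 j s := by
    have hkey : ∀ s : Fin k, ∀ j, 1 ≤ j → betaN L x0 j s = betaN L y0 j s := by
      intro s
      set e : ℕ → ℝ :=
        fun i => ((betaN L x0 i s : ℝ) - (betaN L y0 i s : ℝ)) / (q : ℝ) ^ i with he
      have hen : ∀ i, n ≤ i → e i = 0 := by
        intro i hi
        simp only [he, hbig x0 i s hi, hbig y0 i s hi, sub_self, zero_div]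
      have hzero : ∀ j, 1 ≤ j → e j = 0 := by
        have H : ∀ m, 1 ≤ m →
            ∑ i ∈ Finset.Icc 1 n, (WS q n i ^ m - WS q n (i - 1) ^ m) * e i = 0 := by
          intro m hm
          have h1 := gIter_formula hq L m hm x0 s
          have h2 := gIter_formula hq L m hm y0 s
          have h3 := gIter_const L hL_nonempty hL_part hlump m hm r x0 y0 hx0 hy0 s
          rw [h1, h2] at h3
          have h4 : ∑ i ∈ Finset.Icc 1 n, (WS q n i ^ m - WS q n (i - 1) ^ m) * e i
              = (∑ i ∈ Finset.Icc 1 n,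
                  ((WS q n i ^ m - WS q n (i - 1) ^ m) / (q : ℝ) ^ i) * (betaN L x0 i s : ℝ))
                - ∑ i ∈ Finset.Icc 1 n,
                  ((WS q n i ^ m - WS q n (i - 1) ^ m) / (q : ℝ) ^ i) * (betaN L y0 i s : ℝ) := by
            rw [← Finset.sum_sub_distrib]
            apply Finset.sum_congr rfl
            intro i _
            rw [he]
            ring
          rw [h4, h3, sub_self]
        have Hr : ∀ m, 1 ≤ m →
            ∑ t ∈ Finset.range n, (WS q n (t + 1) ^ m - WS q n t ^ m) * e (t + 1) = 0 := by
          intro m hm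
          have hI := H m hm
          rw [show Finset.Icc 1 n = Finset.Ico 1 (n + 1) by rw [Finset.Ico_add_one_right_eq_Icc],
            Finset.sum_Ico_eq_sum_range] at hI
          simp only [Nat.add_sub_cancel] at hI
          rw [← hI]
          apply Finset.sum_congr rfl ?_
          intro t _
          have h1' : 1 + t = t + 1 := by omega
          rw [h1']
          simp [Nat.add_sub_cancel]
        have Habel : ∀ m : Fin n,
            ∑ t ∈ Finset.range n,
              WS q n (t + 1) ^ ((m : ℕ) + 1) * (e (t + 1) - e (t + 2)) = 0 := by
          intro m
          have hH := Hr ((m : ℕ) + 1) (by omega)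
          have htel := Finset.sum_range_sub
            (fun t => WS q n t ^ ((m : ℕ) + 1) * e (t + 1)) n
          have hfn : WS q n n ^ ((m : ℕ) + 1) * e (n + 1) = 0 := by
            rw [hen (n + 1) (by omega)]; ring
          have hf0 : WS q n 0 ^ ((m : ℕ) + 1) * e (0 + 1) = 0 := by
            rw [WS_zero, zero_pow (by omega : (m : ℕ) + 1 ≠ 0)]; ring
          have hsum : ∑ t ∈ Finset.range n,
              WS q n (t + 1) ^ ((m : ℕ) + 1) * (e (t + 1) - e (t + 2))
              = (∑ t ∈ Finset.range n,
                  (WS q n (t + 1) ^ ((m : ℕ) + 1) - WS q n t ^ ((m : ℕ) + 1)) * e (t + 1))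
                - ∑ t ∈ Finset.range n,
                  ((fun t => WS q n t ^ ((m : ℕ) + 1) * e (t + 1)) (t + 1)
                    - (fun t => WS q n t ^ ((m : ℕ) + 1) * e (t + 1)) t) := by
            rw [← Finset.sum_sub_distrib]
            apply Finset.sum_congr rfl
            intro t _
            simp only []
            ring
          rw [hsum, hH, htel]
          rw [hfn, hf0]
          ring
        have hd : (fun t : Fin n => e ((t : ℕ) + 1) - e ((t : ℕ) + 2)) = 0 := by
          apply vandermonde_zero (fun t : Fin n => WS q n ((t : ℕ) + 1))
          · intro a b hab
            exact WS_lt hq (by exact_mod_cast Nat.add_lt_add_right hab 1)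
              (by have := b.isLt; omega)
          · intro i
            have h0 : WS q n 0 < WS q n ((i : ℕ) + 1) :=
              WS_lt hq (by omega) (by have := i.isLt; omega)
            rw [WS_zero] at h0
            exact ne_of_gt h0
          · intro m
            exact (Fin.sum_univ_eq_sum_range
              (fun t => WS q n (t + 1) ^ ((m : ℕ) + 1) * (e (t + 1) - e (t + 2))) n).trans
              (Habel m)
        have hstep : ∀ t, t < n → e (t + 1) = e (t + 2) := by
          intro t ht
          have hdt := congrFun hd ⟨t, ht⟩
          simp only [Pi.zero_apply] at hdt
          have : e (t + 1) - e (t + 2) = 0 := hdt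
          linarith
        have hdown : ∀ dlt t, 1 ≤ t → t + dlt = n + 1 → e t = 0 := by
          intro dlt
          induction dlt with
          | zero =>
            intro t h1 h2
            exact hen t (by omega)
          | succ dl ih =>
            intro t h1 h2
            rcases le_or_gt n t with h | h
            · exact hen t h
            · have ht' : e t = e (t + 1) := by
                have := hstep (t - 1) (by omega)
                have e1 : t - 1 + 1 = t := by omega
                have e2 : t - 1 + 2 = t + 1 := by omega
                rw [e1, e2] at this
                exact this
              rw [ht']
              exact ih (t + 1) (by omega) (by omega)
        intro j hj
        rcases le_or_gt n j with h | h
        · exact hen j h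
        · exact hdown (n + 1 - j) j hj (by omega)
      intro j hj
      have hej := hzero j hj
      rw [he, div_eq_zero_iff] at hej
      rcases hej with hej | hej
      · have := sub_eq_zero.mp hej
        exact_mod_cast this
      · exact absurd hej (hQne j)
    intro j s
    rcases Nat.eq_zero_or_pos j with rfl | hj1
    · -- j = 0
      have hmem : ∀ s' : Fin k, x0 ∈ L s' ↔ y0 ∈ L s' := by
        intro s'
        obtain ⟨tx, htx, hux⟩ := hL_part x0
        obtain ⟨ty, hty, huy⟩ := hL_part y0
        constructor
        · intro h
          have h1 : s' = tx := hux s' h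
          have h2 : r = tx := hux r hx0
          have h3 : r = ty := huy r hy0
          rw [h1, ← h2, h3]
          exact hty
        · intro h
          have h1 : s' = ty := huy s' h
          have h2 : r = ty := huy r hy0
          have h3 : r = tx := hux r hx0
          rw [h1, ← h2, h3]
          exact htx
      unfold betaN
      have h0 : ∀ x : Fin n → X, (L s).filter (fun z => treeDist x z ≤ 0)
          = (L s).filter (Eq x) := by
        intro x
        apply Finset.filter_congr
        intro z _
        exact treeDist_le_zero_iff x z
      rw [h0 x0, h0 y0, Finset.filter_eq, Finset.filter_eq]
      by_cases hxs : x0 ∈ L s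
      · rw [if_pos hxs, if_pos ((hmem s).mp hxs)]
        simp
      · rw [if_neg hxs, if_neg (fun hy => hxs ((hmem s).mpr hy))]
    · exact hkey s j hj1
  intro i s
  cases i with
  | zero =>
    have h0 : ∀ x : Fin n → X, (L s).filter (fun z => treeDist x z = 0)
        = (L s).filter (fun z => treeDist x z ≤ 0) := by
      intro x
      apply Finset.filter_congr
      intro z _
      omega
    rw [h0 x0, h0 y0]
    exact hbeta 0 s
  | succ i =>
    have hsplit : ∀ x : Fin n → X,
        betaN L x (i + 1) s
          = betaN L x i s + ((L s).filter (fun z => treeDist x z = i + 1)).card := by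
      intro x
      unfold betaN
      have hunion : (L s).filter (fun z => treeDist x z ≤ i + 1)
          = (L s).filter (fun z => treeDist x z ≤ i)
            ∪ (L s).filter (fun z => treeDist x z = i + 1) := by
        ext z
        simp only [Finset.mem_filter, Finset.mem_union]
        constructor
        · rintro ⟨hz, hd⟩
          rcases Nat.lt_or_ge (treeDist x z) (i + 1) with h | h
          · exact Or.inl ⟨hz, by omega⟩
          · exact Or.inr ⟨hz, by omega⟩
        · rintro (⟨hz, hd⟩ | ⟨hz, hd⟩) <;> exact ⟨hz, by omega⟩
      have hdisj : Disjoint ((L s).filter (fun z => treeDist x z ≤ i))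
          ((L s).filter (fun z => treeDist x z = i + 1)) := by
        rw [Finset.disjoint_left]
        intro a ha hb
        rw [Finset.mem_filter] at ha hb
        omega
      rw [hunion, Finset.card_union_of_disjoint hdisj]
    have h1 := hsplit x0
    have h2 := hsplit y0
    have h3 := hbeta (i + 1) s
    have h4 := hbeta i s
    omega
end

section
/- Let n ≥ 2 and let 𝓛 = {L_1,…,L_k} be a lumping of the Insect Markov chain on X^n. For each part L_i, let L_i' ⊆ X^{n−1} be the set of words obtained from the elements of L_i by deleting the last letter, i.e. L_i' = {(x_1,…,x_{n−1}) : (x_1,…,x_n) ∈ L_i}. If L_i' ∩ L_j' ≠ ∅ for some i, j, then L_i' = L_j'. -/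
open scoped Classical

/-!
The kernel `insectP` is a nonnegative combination `∑ₘ wₘ Eₘ` of the kernels
`Eₘ x y = [d(x, y) ≤ m]`, `1 ≤ m ≤ n + 1`. Each `Eₘ` is the indicator of an equivalence relation,
hence positive semidefinite, and `E₁` is the indicator of "same prefix of length `n`", with
`w₁ > 0`. Let `f` be the difference of the uniform distributions on `L i` and `L j`. Lumpability
makes `insectP f` constant on `L i` and on `L j`, and since rows of `insectP` only see prefixes,
a common prefix forces the two constants to agree; as `f` has total mass zero, `⟨f, insectP f⟩ = 0`.
Hence `⟨f, E₁ f⟩ = 0`: the push-forward of `f` to prefixes vanishes, so `L i` and `L j` have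
proportional prefix counts and in particular the same prefixes.
-/

open Finset

lemma insectAlpha_nonneg {q : ℕ} (hq : 1 ≤ q) (N j : ℕ) : 0 ≤ insectAlpha q N j := by
  have hq' : (1 : ℝ) ≤ q := by exact_mod_cast hq
  have h₁ : (1 : ℝ) ≤ (q : ℝ) ^ j := one_le_pow₀ hq'
  have h₂ : (1 : ℝ) ≤ (q : ℝ) ^ (j + 1) := one_le_pow₀ hq'
  unfold insectAlpha
  split_ifs
  · exact zero_le_one
  · exact div_nonneg (by linarith) (by linarith)
  · exact le_rfl

lemma insectAlpha_le_one {q : ℕ} (hq : 1 ≤ q) (N j : ℕ) : insectAlpha q N j ≤ 1 := by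
  have hq' : (1 : ℝ) ≤ q := by exact_mod_cast hq
  have h₁ : (1 : ℝ) ≤ (q : ℝ) ^ j := one_le_pow₀ hq'
  have h₂ : (q : ℝ) ^ j ≤ (q : ℝ) ^ (j + 1) := pow_le_pow_right₀ hq' j.le_succ
  unfold insectAlpha
  split_ifs
  · exact le_rfl
  · exact div_le_one_of_le₀ (by linarith) (by linarith)
  · exact zero_le_one

lemma insectAlpha_lt_one {q : ℕ} (hq : 2 ≤ q) (N : ℕ) {j : ℕ} (hj : j ≠ 0) :
    insectAlpha q N j < 1 := by
  have hq' : (1 : ℝ) < q := by exact_mod_cast hq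
  have h₁ : (1 : ℝ) ≤ (q : ℝ) ^ j := one_le_pow₀ hq'.le
  have h₂ : (q : ℝ) ^ j < (q : ℝ) ^ (j + 1) := pow_lt_pow_right₀ hq' j.lt_succ_self
  rw [insectAlpha, if_neg hj]
  split_ifs
  · exact (div_lt_one (by linarith)).mpr (by linarith)
  · exact zero_lt_one

noncomputable def insectWeight (q N m : ℕ) : ℝ :=
  1 / (q : ℝ) ^ m * (∏ t ∈ Ico 1 m, insectAlpha q N t) * (1 - insectAlpha q N m)

lemma insectWeight_nonneg {q : ℕ} (hq : 1 ≤ q) (N m : ℕ) : 0 ≤ insectWeight q N m :=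
  mul_nonneg
    (mul_nonneg (by positivity) (prod_nonneg fun t _ => insectAlpha_nonneg hq N t))
    (sub_nonneg.mpr (insectAlpha_le_one hq N m))

lemma insectWeight_one_pos {q : ℕ} (hq : 2 ≤ q) (N : ℕ) : 0 < insectWeight q N 1 := by
  have hq' : (0 : ℝ) < q := by exact_mod_cast (by omega : 0 < q)
  have hα : insectAlpha q N 1 < 1 := insectAlpha_lt_one hq N one_ne_zero
  rw [insectWeight, Ico_self, prod_empty, mul_one]
  exact mul_pos (by positivity) (sub_pos.mpr hα)

section TreeDist

variable {X : Type*}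

lemma treeDist_le_iff {N : ℕ} (x y : Fin N → X) (m : ℕ) :
    treeDist x y ≤ m ↔ ∀ j : Fin N, (j : ℕ) < N - m → x j = y j := by
  set s := (range (N + 1)).filter fun l => ∀ j : Fin N, (j : ℕ) < l → x j = y j
  obtain ⟨M, hMs, hM⟩ := s.exists_mem_eq_sup ⟨0, by simp [s]⟩ id
  obtain ⟨hMN, hMagree⟩ := mem_filter.mp hMs
  change N - s.sup id ≤ m ↔ _
  rw [hM, id]
  refine ⟨fun h j hj => hMagree j (by omega), fun h => ?_⟩
  have hmem : N - m ∈ s := mem_filter.mpr ⟨mem_range.mpr (by omega), h⟩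
  have : N - m ≤ s.sup id := le_sup (f := id) hmem
  rw [hM, id] at this
  omega

lemma treeDist_le_iff_domRestrict_eq {N : ℕ} (x y : Fin N → X) (m : ℕ) :
    treeDist x y ≤ m ↔
      Set.domRestrict {j : Fin N | (j : ℕ) < N - m} x =
        Set.domRestrict {j : Fin N | (j : ℕ) < N - m} y := by
  rw [treeDist_le_iff, Set.domRestrict_eq_domRestrict_iff]
  rfl

variable {n : ℕ}

lemma treeDist_le_one_iff (x y : Fin (n + 1) → X) :
    treeDist x y ≤ 1 ↔ x ∘ Fin.castSucc = y ∘ Fin.castSucc := by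
  rw [treeDist_le_iff, funext_iff]
  refine ⟨fun h j => h j.castSucc (by simp), fun h j hj => ?_⟩
  simpa [Fin.castSucc_castLT j (by omega : (j : ℕ) < n)] using h (j.castLT (by omega))

lemma treeDist_le_iff_of_comp_castSucc_eq {x x' : Fin (n + 1) → X}
    (hx : x ∘ Fin.castSucc = x' ∘ Fin.castSucc) (y : Fin (n + 1) → X) {m : ℕ} (hm : 1 ≤ m) :
    treeDist x y ≤ m ↔ treeDist x' y ≤ m := by
  have hagree : ∀ j : Fin (n + 1), (j : ℕ) < n + 1 - m → x j = x' j := fun j hj => by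
    simpa [Fin.castSucc_castLT j (by omega : (j : ℕ) < n)]
      using congrFun hx (j.castLT (by omega))
  simp only [treeDist_le_iff]
  exact forall₂_congr fun j hj => by rw [hagree j hj]

end TreeDist

lemma sum_sum_mul_ite_eq_sum_sq {α γ : Type*} [Fintype α] [Fintype γ] [DecidableEq γ]
    (h : α → γ) (f : α → ℝ) :
    ∑ x, ∑ y, f x * f y * (if h x = h y then 1 else 0)
      = ∑ c, (∑ x ∈ univ.filter (fun x => h x = c), f x) ^ 2 := by
  calc ∑ x, ∑ y, f x * f y * (if h x = h y then 1 else 0)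
      = ∑ x, ∑ y ∈ univ.filter (fun y => h y = h x), f x * f y := by
        simp_rw [mul_boole, sum_filter, eq_comm]
    _ = ∑ c, ∑ x ∈ univ.filter (fun x => h x = c), ∑ y ∈ univ.filter (fun y => h y = h x),
          f x * f y :=
        (sum_fiberwise _ h _).symm
    _ = ∑ c, ∑ x ∈ univ.filter (fun x => h x = c), ∑ y ∈ univ.filter (fun y => h y = c),
          f x * f y :=
        sum_congr rfl fun c _ => sum_congr rfl fun x hx => by rw [(mem_filter.mp hx).2]
    _ = _ := by simp_rw [sq, sum_mul_sum]

section InsectKernel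

variable {X : Type*} [Fintype X]

lemma insectP_eq_sum {N : ℕ} (x y : Fin N → X) :
    insectP x y = ∑ m ∈ Icc 1 N,
      insectWeight (Fintype.card X) N m * if treeDist x y ≤ m then 1 else 0 := by
  have hIcc : Icc (max (treeDist x y) 1) N = (Icc 1 N).filter fun m => treeDist x y ≤ m := by
    ext m
    simp only [mem_Icc, mem_filter]
    omega
  simp_rw [mul_boole]
  rw [← sum_filter, ← hIcc]
  rfl

lemma sum_sum_mul_insectP {N : ℕ} (f : (Fin N → X) → ℝ) :
    ∑ x, ∑ y, f x * f y * insectP x y = ∑ m ∈ Icc 1 N, insectWeight (Fintype.card X) N m *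
      ∑ x, ∑ y, f x * f y * if treeDist x y ≤ m then 1 else 0 := by
  simp_rw [insectP_eq_sum, mul_sum]
  symm
  rw [sum_comm]
  refine sum_congr rfl fun x _ => ?_
  rw [sum_comm]
  exact sum_congr rfl fun y _ => sum_congr rfl fun m _ => by ring

lemma sum_sum_mul_ite_treeDist_le_nonneg {N : ℕ} (f : (Fin N → X) → ℝ) (m : ℕ) :
    0 ≤ ∑ x, ∑ y, f x * f y * if treeDist x y ≤ m then 1 else 0 := by
  have key := sum_sum_mul_ite_eq_sum_sq (Set.domRestrict {j : Fin N | (j : ℕ) < N - m}) f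
  simp only [← treeDist_le_iff_domRestrict_eq] at key
  rw [key]
  positivity

variable {n : ℕ}

lemma insectP_eq_of_comp_castSucc_eq {x x' : Fin (n + 1) → X}
    (hx : x ∘ Fin.castSucc = x' ∘ Fin.castSucc) (y : Fin (n + 1) → X) :
    insectP x y = insectP x' y := by
  simp only [insectP_eq_sum]
  refine sum_congr rfl fun m hm => ?_
  simp only [treeDist_le_iff_of_comp_castSucc_eq hx y (mem_Icc.mp hm).1]

lemma sum_fiber_eq_zero_of_sum_sum_mul_insectP_eq_zero (hq : 2 ≤ Fintype.card X)
    {f : (Fin (n + 1) → X) → ℝ} (hf : ∑ x, ∑ y, f x * f y * insectP x y = 0)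
    (v : Fin n → X) :
    ∑ x ∈ univ.filter (fun x => x ∘ Fin.castSucc = v), f x = 0 := by
  rw [sum_sum_mul_insectP, sum_eq_zero_iff_of_nonneg fun m _ =>
      mul_nonneg (insectWeight_nonneg (by omega) _ _) (sum_sum_mul_ite_treeDist_le_nonneg f m)]
    at hf
  have hdiag := (mul_eq_zero.mp (hf 1 (by simp))).resolve_left
    (insectWeight_one_pos hq _).ne'
  have key := sum_sum_mul_ite_eq_sum_sq (fun x : Fin (n + 1) → X => x ∘ Fin.castSucc) f
  simp only [← treeDist_le_one_iff] at key
  rw [key] at hdiag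
  exact pow_eq_zero_iff two_ne_zero |>.mp <|
    (sum_eq_zero_iff_of_nonneg fun c _ => sq_nonneg _).mp hdiag v (mem_univ v)

end InsectKernel

section UniformDiff

variable {α : Type*} [Fintype α]

noncomputable def uniformDiff (S S' : Finset α) (x : α) : ℝ :=
  (if x ∈ S then (#S : ℝ)⁻¹ else 0) - (if x ∈ S' then (#S' : ℝ)⁻¹ else 0)

lemma sum_uniformDiff_mul (S S' : Finset α) (g : α → ℝ) :
    ∑ x, uniformDiff S S' x * g x = (∑ x ∈ S, g x) / #S - (∑ x ∈ S', g x) / #S' := by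
  simp only [uniformDiff, sub_mul, ite_mul, zero_mul, sum_sub_distrib, sum_ite_mem, univ_inter,
    inv_mul_eq_div, sum_div]

lemma sum_uniformDiff_mul_eq_zero {S S' : Finset α} (hS : S.Nonempty) (hS' : S'.Nonempty)
    {g : α → ℝ} {c : ℝ} (hg : ∀ x ∈ S ∪ S', g x = c) :
    ∑ x, uniformDiff S S' x * g x = 0 := by
  rw [sum_uniformDiff_mul, sum_congr rfl fun x hx => hg x (mem_union_left S' hx),
    sum_congr rfl fun x hx => hg x (mem_union_right S hx)]
  simp [hS.card_ne_zero, hS'.card_ne_zero]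

lemma sum_sum_uniformDiff_mul_eq_zero {ι : Type*} (K : α → α → ℝ) (L : ι → Finset α)
    (hlump : ∀ r s, ∀ x ∈ L r, ∀ x' ∈ L r, ∑ y ∈ L s, K x y = ∑ y ∈ L s, K x' y)
    {i j : ι} {x₀ y₀ : α} (hx₀ : x₀ ∈ L i) (hy₀ : y₀ ∈ L j) (hK : K x₀ = K y₀) :
    ∑ x, ∑ y, uniformDiff (L i) (L j) x * uniformDiff (L i) (L j) y * K x y = 0 := by
  set g : α → ℝ := fun x => ∑ y, uniformDiff (L i) (L j) y * K x y
  have hg : ∀ x ∈ L i ∪ L j, g x = g x₀ := by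
    intro x hx
    simp only [g, sum_uniformDiff_mul]
    rcases mem_union.mp hx with hx | hx
    · rw [hlump i i x hx x₀ hx₀, hlump i j x hx x₀ hx₀]
    · rw [hlump j i x hx y₀ hy₀, hlump j j x hx y₀ hy₀, hK]
  calc ∑ x, ∑ y, uniformDiff (L i) (L j) x * uniformDiff (L i) (L j) y * K x y
      = ∑ x, uniformDiff (L i) (L j) x * g x := by
        simp_rw [g, mul_sum, mul_assoc]
    _ = 0 := sum_uniformDiff_mul_eq_zero ⟨x₀, hx₀⟩ ⟨y₀, hy₀⟩ hg

lemma mem_image_iff_of_sum_fiber_uniformDiff_eq_zero {β : Type*} [DecidableEq β]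
    {S S' : Finset α} {π : α → β} {v : β}
    (h : ∑ x ∈ univ.filter (fun x => π x = v), uniformDiff S S' x = 0) :
    v ∈ S.image π ↔ v ∈ S'.image π := by
  have hcount : ∀ T : Finset α, v ∈ T.image π ↔ ((#(T.filter (π · = v)) : ℝ) / #T ≠ 0) := by
    intro T
    simp only [ne_eq, div_eq_zero_iff, Nat.cast_eq_zero, card_eq_zero, filter_eq_empty_iff,
      mem_image]
    grind
  have hfiber : ∑ x ∈ univ.filter (fun x => π x = v), uniformDiff S S' x
      = ∑ x, uniformDiff S S' x * if π x = v then 1 else 0 := by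
    simp_rw [sum_filter, mul_boole]
  rw [hfiber, sum_uniformDiff_mul, sub_eq_zero] at h
  simp only [sum_boole] at h
  rw [hcount, hcount, h]

end UniformDiff

theorem stmt_13_general {X : Type*} [Fintype X] {n k : ℕ}
    (hq : 2 ≤ Fintype.card X)
    (L : Fin k → Finset (Fin (n + 1) → X))
    (hlump : ∀ r s : Fin k, ∀ x ∈ L r, ∀ x' ∈ L r,
        ∑ y ∈ L s, insectP x y = ∑ y ∈ L s, insectP x' y)
    (i j : Fin k)
    (hmeet : (((L i).image (fun w => w ∘ Fin.castSucc)) ∩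
              ((L j).image (fun w => w ∘ Fin.castSucc))).Nonempty) :
    (L i).image (fun w => w ∘ Fin.castSucc)
      = (L j).image (fun w => w ∘ Fin.castSucc) := by
  obtain ⟨w, hw⟩ := hmeet
  obtain ⟨hwi, hwj⟩ := mem_inter.mp hw
  obtain ⟨x₀, hx₀, hx₀w⟩ := mem_image.mp hwi
  obtain ⟨y₀, hy₀, hy₀w⟩ := mem_image.mp hwj
  have hrows : insectP x₀ = insectP y₀ :=
    funext (insectP_eq_of_comp_castSucc_eq (hx₀w.trans hy₀w.symm))
  have hquad := sum_sum_uniformDiff_mul_eq_zero insectP L hlump hx₀ hy₀ hrows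
  ext v
  exact mem_image_iff_of_sum_fiber_uniformDiff_eq_zero
    (sum_fiber_eq_zero_of_sum_sum_mul_insectP_eq_zero hq hquad v)

/-- Let `𝓛 = {L_1,…,L_k}` be a lumping of the Insect Markov chain on
`X^{n+1}` (depth `n + 1 ≥ 2`).  For each part `L i` let `L i'` be its image in `X^n` under
deletion of the last letter.  If `L i' ∩ L j' ≠ ∅`, then `L i' = L j'`. -/
theorem stmt_13 {X : Type*} [Fintype X] {n k : ℕ}
    (hq : 2 ≤ Fintype.card X) (hn : 1 ≤ n)
    (L : Fin k → Finset (Fin (n + 1) → X))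
    (hL_nonempty : ∀ s, (L s).Nonempty)
    (hL_part : ∀ x : Fin (n + 1) → X, ∃! s, x ∈ L s)
    (hlump : ∀ r s : Fin k, ∀ x ∈ L r, ∀ x' ∈ L r,
        ∑ y ∈ L s, insectP x y = ∑ y ∈ L s, insectP x' y)
    (i j : Fin k)
    (hmeet : (((L i).image (fun w => w ∘ Fin.castSucc)) ∩
              ((L j).image (fun w => w ∘ Fin.castSucc))).Nonempty) :
    (L i).image (fun w => w ∘ Fin.castSucc)
      = (L j).image (fun w => w ∘ Fin.castSucc) :=
  stmt_13_general hq L hlump i j hmeet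
end

section
/- Let 𝓛 = {L_1,…,L_k} be a lumping of the Insect Markov chain on X^n. Then there exists a subgroup K of the group of all permutations g of X^n satisfying d(gx, gy) = d(x,y) for all x, y ∈ X^n (the automorphism group of the rooted q-ary tree of depth n acting on its boundary), such that the orbits of K on X^n are exactly the parts L_1,…,L_k of 𝓛. -/
open scoped Classical

/-!
Lumpability says that the space `W` of functions constant on the parts is invariant under the
transition operator `P`. Let `E m` average a function over the balls of radius `m` (the leaves
below a vertex of level `m`). Then `P = ∑_{m < n} w (n - m) • E m` with positive weights `w`,
the increments `E m - E (m - 1)` are eigenprojections of `P` with pairwise distinct eigenvalues,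
and hence `W` is invariant under every `E m`: the number of points of each part in a ball
depends only on the radius and on the part of the centre. By downward induction on the radius
these counts give part-preserving isometries between the balls around any two points of the same
part, the children of the two balls being matched by their counts. At radius `0` these are
automorphisms of the tree fixing every part, and such automorphisms form the required subgroup.
-/

open Finset
open scoped Pointwise

theorem exists_perm_comp_eq_of_card_fiber_eq {A γ : Type*} [Fintype A] [DecidableEq A]
    {F G : A → γ} (h : ∀ c, #{a | F a = c} = #{a | G a = c}) {a₀ b₀ : A}
    (h₀ : F a₀ = G b₀) : ∃ σ : Equiv.Perm A, σ a₀ = b₀ ∧ ∀ a, G (σ a) = F a := by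
  let τ : Equiv.Perm A := Equiv.ofFiberEquiv (f := F) (g := G) fun c =>
    Fintype.equivOfCardEq (by rw [Fintype.card_subtype, Fintype.card_subtype, h])
  have hτ : ∀ a, G (τ a) = F a := Equiv.ofFiberEquiv_map _
  -- correct `τ` by a transposition of two points with the same `G`-value
  have hswap : ∀ b, G (Equiv.swap (τ a₀) b₀ b) = G b := fun b => by
    rw [Equiv.swap_apply_def]
    split_ifs with h1 h2
    · rw [h1, hτ, h₀]
    · rw [h2, hτ, h₀]
    · rfl
  exact ⟨τ.trans (Equiv.swap (τ a₀) b₀), Equiv.swap_apply_left _ _, fun a => by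
    rw [Equiv.trans_apply, hswap, hτ]⟩

section EigenvectorComponents

variable {K V : Type*} [Field K] [AddCommGroup V] [Module K V]

theorem Submodule.mem_of_sum_eigenvectors_mem {ι : Type*} [DecidableEq ι]
    (f : Module.End K V) {W : Submodule K V} (hW : ∀ w ∈ W, f w ∈ W) {μ : ι → K} {v : ι → V}
    (s : Finset ι) (hμ : Set.InjOn μ s) (hv : ∀ i ∈ s, f (v i) = μ i • v i)
    (hsum : ∑ i ∈ s, v i ∈ W) :
    ∀ i ∈ s, v i ∈ W := by
  induction s using Finset.induction_on generalizing v with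
  | empty => simp
  | insert a s ha ih =>
    rw [sum_insert ha] at hsum
    have hμa : ∀ i ∈ s, μ i - μ a ≠ 0 := fun i hi =>
      sub_ne_zero.2 fun h => ha (hμ (mem_insert_of_mem hi) (mem_insert_self a s) h ▸ hi)
    -- applying `f - μ a` kills `v a` and rescales the other components
    have hrest : ∀ i ∈ s, (μ i - μ a) • v i ∈ W := by
      refine ih (hμ.mono (by simp)) (fun i hi => ?_) ?_
      · rw [map_smul, hv i (mem_insert_of_mem hi), smul_comm]
      · have := W.sub_mem (hW _ hsum) (W.smul_mem (μ a) hsum)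
        convert this using 1
        simp only [map_add, map_sum, hv a (mem_insert_self a s), smul_add, smul_sum, sub_smul]
        rw [sum_sub_distrib, Finset.sum_congr rfl fun i hi => hv i (mem_insert_of_mem hi)]
        abel
    have hs : ∀ i ∈ s, v i ∈ W := fun i hi => (W.smul_mem_iff (hμa i hi)).1 (hrest i hi)
    intro i hi
    rcases mem_insert.1 hi with rfl | hi
    · simpa using W.sub_mem hsum (W.sum_mem hs)
    · exact hs i hi

end EigenvectorComponents

section NestedProjections

variable {K V : Type*} [Field K] [AddCommGroup V] [Module K V] {E : ℕ → Module.End K V}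

def chainIncrement (E : ℕ → Module.End K V) : ℕ → Module.End K V
  | 0 => E 0
  | i + 1 => E (i + 1) - E i

theorem sum_range_chainIncrement (m : ℕ) : ∑ i ∈ range (m + 1), chainIncrement E i = E m := by
  induction m with
  | zero => simp [chainIncrement]
  | succ m ih => rw [sum_range_succ, ih, chainIncrement, add_sub_cancel]

theorem mul_chainIncrement (hE : ∀ a b, E a * E b = E (min a b)) (a i : ℕ) :
    E a * chainIncrement E i = if i ≤ a then chainIncrement E i else 0 := by
  cases i with
  | zero => simp [chainIncrement, hE]
  | succ i =>
    rw [chainIncrement, mul_sub, hE, hE]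
    split_ifs with h
    · rw [min_eq_right h, min_eq_right (by omega)]
    · rw [min_eq_left (by omega), min_eq_left (by omega), sub_self]

theorem sum_smul_mul_chainIncrement (hE : ∀ a b, E a * E b = E (min a b)) (ν : ℕ → K)
    (n i : ℕ) :
    (∑ m ∈ range n, ν m • E m) * chainIncrement E i =
      (∑ m ∈ range n with i ≤ m, ν m) • chainIncrement E i := by
  simp only [sum_mul, smul_mul_assoc, mul_chainIncrement hE, smul_ite, smul_zero, sum_ite,
    sum_const_zero, add_zero, sum_smul]

variable [LinearOrder K] [IsStrictOrderedRing K]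

theorem apply_mem_of_invariant_sum_smul (hE : ∀ a b, E a * E b = E (min a b)) {n : ℕ}
    (hEn : E n = 1) {ν : ℕ → K} (hν : ∀ m < n, 0 < ν m) {W : Submodule K V}
    (hW : ∀ w ∈ W, (∑ m ∈ range n, ν m • E m) w ∈ W) (m : ℕ) {w : V} (hw : w ∈ W) :
    E m w ∈ W := by
  -- the increments are eigenprojections, with eigenvalues strictly decreasing in `i ≤ n`
  have hanti : StrictAntiOn (fun i => ∑ m ∈ range n with i ≤ m, ν m) (range (n + 1)) := by
    intro i hi j hj hij
    simp only [coe_range, Set.mem_Iio] at hi hj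
    refine sum_lt_sum_of_subset (i := i) (fun m hm => ?_)
      (by simp only [mem_filter, mem_range]; omega) (by simp only [mem_filter]; omega)
      (hν i (by omega)) fun m hm _ => (hν m (by simpa using (mem_filter.1 hm).1)).le
    simp only [mem_filter] at hm ⊢
    exact ⟨hm.1, by omega⟩
  have hinc : ∀ i ∈ range (n + 1), chainIncrement E i w ∈ W := by
    refine Submodule.mem_of_sum_eigenvectors_mem _ hW _ hanti.injOn (fun i _ => ?_) ?_
    · rw [← Module.End.mul_apply, sum_smul_mul_chainIncrement hE, LinearMap.smul_apply]
    · rw [← LinearMap.sum_apply, sum_range_chainIncrement, hEn, Module.End.one_apply]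
      exact hw
  have hEm : E m = E (min m n) := by rw [← hE, hEn, mul_one]
  rw [hEm, ← sum_range_chainIncrement (E := E), LinearMap.sum_apply]
  exact W.sum_mem fun i hi => hinc i (by simp at hi ⊢; omega)

end NestedProjections

section Lumping

variable {α ι R : Type*} [Fintype α] [CommSemiring R]

def constOnFibers (R : Type*) [CommSemiring R] (ℓ : α → ι) : Submodule R (α → R) where
  carrier := {v | ∀ x y, ℓ x = ℓ y → v x = v y}
  add_mem' hv hw x y h := by simp [hv x y h, hw x y h]
  zero_mem' _ _ _ := rfl
  smul_mem' c v hv x y h := by simp [hv x y h]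

theorem mulVec_mem_constOnFibers [DecidableEq ι] {ℓ : α → ι} {M : Matrix α α R}
    (hM : ∀ x x', ℓ x = ℓ x' → ∀ s, ∑ y with ℓ y = s, M x y = ∑ y with ℓ y = s, M x' y)
    {v : α → R} (hv : v ∈ constOnFibers R ℓ) : M.mulVec v ∈ constOnFibers R ℓ := by
  intro x x' h
  have hmaps : ∀ y ∈ univ, ℓ y ∈ univ.image ℓ := fun y _ => mem_image_of_mem ℓ (mem_univ y)
  simp only [Matrix.mulVec, dotProduct]
  rw [← sum_fiberwise_of_maps_to hmaps, ← sum_fiberwise_of_maps_to hmaps]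
  refine sum_congr rfl fun s hs => ?_
  obtain ⟨y₀, -, rfl⟩ := mem_image.1 hs
  have hfiber : ∀ z,
      ∑ y with ℓ y = ℓ y₀, M z y * v y = (∑ y with ℓ y = ℓ y₀, M z y) * v y₀ := fun z => by
    rw [sum_mul]
    exact sum_congr rfl fun y hy => by rw [hv y y₀ (mem_filter.1 hy).2]
  rw [hfiber, hfiber, hM x x' h]

end Lumping

def isometrySubgroup {α β : Type*} (d : α → α → β) : Subgroup (Equiv.Perm α) where
  carrier := {g | ∀ x y, d (g x) (g y) = d x y}
  mul_mem' hg hh x y := (hg _ _).trans (hh x y)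
  one_mem' _ _ := rfl
  inv_mem' {g} hg x y := by simpa using (hg (g⁻¹ x) (g⁻¹ y)).symm

namespace InsectChain

variable {X : Type*} [Fintype X] {n : ℕ}

section Balls

/-- The leaves below the vertex of level `m` above the leaf `x`. -/
def ball (m : ℕ) (x : Fin n → X) : Finset (Fin n → X) :=
  Fintype.piFinset fun i => if (i : ℕ) < m then {x i} else univ

theorem mem_ball {m : ℕ} {x y : Fin n → X} :
    y ∈ ball m x ↔ ∀ i : Fin n, (i : ℕ) < m → x i = y i := by
  simp only [ball, Fintype.mem_piFinset]
  refine forall_congr' fun i => ?_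
  split_ifs with h <;> simp [h, eq_comm]

theorem mem_ball_self (m : ℕ) (x : Fin n → X) : x ∈ ball m x :=
  mem_ball.2 fun _ _ => rfl

theorem mem_ball_comm {m : ℕ} {x y : Fin n → X} : y ∈ ball m x ↔ x ∈ ball m y := by
  simp only [mem_ball, eq_comm]

theorem ball_eq_of_mem {m : ℕ} {x y : Fin n → X} (h : y ∈ ball m x) : ball m y = ball m x := by
  ext z
  simp only [mem_ball] at h ⊢
  exact forall₂_congr fun i hi => by rw [h i hi]

theorem mem_ball_of_le {m m' : ℕ} (hm : m' ≤ m) {x y : Fin n → X} (h : y ∈ ball m x) :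
    y ∈ ball m' x :=
  mem_ball.2 fun i hi => mem_ball.1 h i (hi.trans_le hm)

theorem ball_zero (x : Fin n → X) : ball 0 x = univ := by
  ext y
  simp [mem_ball]

theorem ball_self (x : Fin n → X) : ball n x = {x} := by
  ext y
  simp only [mem_ball, mem_singleton]
  exact ⟨fun h => funext fun i => (h i i.2).symm, fun h i _ => h ▸ rfl⟩

theorem card_ball (m : ℕ) (x : Fin n → X) : #(ball m x) = Fintype.card X ^ (n - m) := by
  have hcompl : #{i : Fin n | m ≤ (i : ℕ)} = n - m := by
    have := card_filter_add_card_filter_not (s := univ) fun i : Fin n => (i : ℕ) < m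
    simp only [Fin.card_filter_val_lt, card_univ, Fintype.card_fin, not_lt] at this
    omega
  simp [ball, Fintype.card_piFinset, apply_ite Finset.card, prod_ite, hcompl]

theorem mem_ball_succ_update {i : Fin n} {x u : Fin n → X} {a : X} :
    u ∈ ball (i + 1) (Function.update x i a) ↔ u ∈ ball i x ∧ u i = a := by
  simp only [mem_ball]
  constructor
  · intro h
    refine ⟨fun j hj => ?_, by simpa using (h i (Nat.lt_succ_self _)).symm⟩
    simpa [Function.update_of_ne (Fin.ne_of_lt hj)] using h j (by omega)
  · rintro ⟨h, rfl⟩ j hj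
    rcases (Nat.lt_succ_iff.1 hj).lt_or_eq with hj | hj
    · simpa [Function.update_of_ne (Fin.ne_of_lt hj)] using h j hj
    · rw [Fin.ext hj, Function.update_self]

theorem treeDist_le_iff {j : ℕ} (hj : j ≤ n) {x y : Fin n → X} :
    treeDist x y ≤ j ↔ y ∈ ball (n - j) x := by
  set S := (range (n + 1)).filter fun m => ∀ i : Fin n, (i : ℕ) < m → x i = y i
  have hS : ∀ m, m ∈ S ↔ m ≤ n ∧ y ∈ ball m x := fun m => by
    simp [S, mem_ball]
  have hdist : treeDist x y = n - S.sup id := rfl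
  constructor
  · intro h
    obtain ⟨b, hb, hsup⟩ :=
      exists_mem_eq_sup S ⟨0, (hS 0).2 ⟨by omega, by simp [ball_zero]⟩⟩ id
    exact mem_ball_of_le (by simp only [id] at hsup; omega) ((hS b).1 hb).2
  · intro h
    have := le_sup (f := id) ((hS _).2 ⟨Nat.sub_le n j, h⟩)
    simp only [id] at this
    omega

theorem treeDist_eq_zero_iff {x y : Fin n → X} : treeDist x y = 0 ↔ x = y := by
  rw [← Nat.le_zero, treeDist_le_iff (Nat.zero_le n), Nat.sub_zero, ball_self, mem_singleton,
    eq_comm]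

theorem treeDist_eq_of_mem_ball {i : Fin n} {x y : Fin n → X} (h : y ∈ ball i x)
    (hne : x i ≠ y i) : treeDist x y = n - i := by
  have hle : treeDist x y ≤ n - i := by
    rwa [treeDist_le_iff (Nat.sub_le n i), Nat.sub_sub_self i.2.le]
  have hnot : ¬ treeDist x y ≤ n - (i + 1) := by
    rw [treeDist_le_iff (by omega), Nat.sub_sub_self (by omega)]
    exact fun h' => hne (mem_ball.1 h' i (Nat.lt_succ_self _))
  omega

end Balls

section BallAverages

theorem sum_ball_sum_ball {M : Type*} [AddCommMonoid M] (f : (Fin n → X) → M) (a b : ℕ)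
    (x : Fin n → X) :
    ∑ y ∈ ball a x, ∑ z ∈ ball b y, f z =
      Fintype.card X ^ (n - max a b) • ∑ z ∈ ball (min a b) x, f z := by
  rcases le_total b a with hba | hab
  · rw [max_eq_left hba, min_eq_right hba, ← card_ball a x, ← sum_const]
    exact sum_congr rfl fun y hy => by rw [ball_eq_of_mem (mem_ball_of_le hba hy)]
  · rw [max_eq_right hab, min_eq_left hab, smul_sum]
    have hmem : ∀ y z, y ∈ ball a x ∧ z ∈ ball b y ↔ y ∈ ball b z ∧ z ∈ ball a x :=
      fun y z => ⟨fun ⟨hy, hz⟩ => ⟨mem_ball_comm.1 hz,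
          ball_eq_of_mem hy ▸ ball_eq_of_mem (mem_ball_of_le hab hz) ▸ mem_ball_self a z⟩,
        fun ⟨hy, hz⟩ => ⟨ball_eq_of_mem hz ▸ ball_eq_of_mem (mem_ball_of_le hab hy) ▸
          mem_ball_self a y, mem_ball_comm.1 hy⟩⟩
    rw [sum_comm' hmem]
    exact sum_congr rfl fun z _ => by rw [sum_const, card_ball]

noncomputable def ballAverage (m : ℕ) : Module.End ℝ ((Fin n → X) → ℝ) where
  toFun v x := (#(ball m x) : ℝ)⁻¹ * ∑ y ∈ ball m x, v y
  map_add' v w := by ext x; simp [sum_add_distrib, mul_add]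
  map_smul' c v := by ext x; simp [mul_sum, mul_left_comm]

theorem ballAverage_apply (m : ℕ) (v : (Fin n → X) → ℝ) (x : Fin n → X) :
    ballAverage m v x = (#(ball m x) : ℝ)⁻¹ * ∑ y ∈ ball m x, v y :=
  rfl

theorem ballAverage_mul (a b : ℕ) :
    ballAverage a * ballAverage b =
      (ballAverage (min a b) : Module.End ℝ ((Fin n → X) → ℝ)) := by
  refine LinearMap.ext fun v => funext fun x => ?_
  have hpow : ∀ m, ((Fintype.card X : ℝ) ^ (n - m)) ≠ 0 := fun m => by
    exact_mod_cast (card_ball m x ▸ card_pos.2 ⟨x, mem_ball_self m x⟩).ne'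
  have ha := hpow a
  have hb := hpow b
  simp only [Module.End.mul_apply, ballAverage_apply, card_ball, Nat.cast_pow, ← mul_sum]
  rw [sum_ball_sum_ball, nsmul_eq_mul, Nat.cast_pow]
  rcases le_total a b with h | h
  · rw [max_eq_right h, min_eq_left h]
    field_simp
  · rw [max_eq_left h, min_eq_right h]
    field_simp

theorem ballAverage_self : (ballAverage n : Module.End ℝ ((Fin n → X) → ℝ)) = 1 := by
  refine LinearMap.ext fun v => funext fun x => ?_
  simp [ballAverage_apply, ball_self]

end BallAverages

section InsectOperator

/-- The probability that the insect climbs exactly `i` levels before descending. -/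
noncomputable def insectWeight (q n i : ℕ) : ℝ :=
  (∏ t ∈ Ico 1 i, insectAlpha q n t) * (1 - insectAlpha q n i)

theorem insectAlpha_pos {q t : ℕ} (hq : 2 ≤ q) (ht : 1 ≤ t) (htn : t ≤ n - 1) :
    0 < insectAlpha q n t := by
  have h1 : (1 : ℝ) < (q : ℝ) ^ t := one_lt_pow₀ (by exact_mod_cast hq) (by omega)
  have h2 : (q : ℝ) ^ t < (q : ℝ) ^ (t + 1) :=
    pow_lt_pow_right₀ (by exact_mod_cast hq) (by omega)
  rw [insectAlpha, if_neg (by omega), if_pos htn]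
  exact div_pos (by linarith) (by linarith)

theorem insectAlpha_lt_one {q j : ℕ} (hq : 2 ≤ q) (hj : 1 ≤ j) : insectAlpha q n j < 1 := by
  have h1 : (1 : ℝ) < (q : ℝ) ^ j := one_lt_pow₀ (by exact_mod_cast hq) (by omega)
  have h2 : (q : ℝ) ^ j < (q : ℝ) ^ (j + 1) :=
    pow_lt_pow_right₀ (by exact_mod_cast hq) (by omega)
  rw [insectAlpha, if_neg (by omega)]
  split_ifs
  · exact (div_lt_one (by linarith)).2 (by linarith)
  · exact one_pos

theorem insectWeight_pos {q i : ℕ} (hq : 2 ≤ q) (hi : 1 ≤ i) (hin : i ≤ n) :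
    0 < insectWeight q n i :=
  mul_pos (prod_pos fun t ht => insectAlpha_pos hq (mem_Ico.1 ht).1 (by grind))
    (sub_pos.2 (insectAlpha_lt_one hq hi))

theorem insectP_eq_sum (x y : Fin n → X) :
    insectP x y = ∑ i ∈ Icc 1 n,
      if treeDist x y ≤ i then ((Fintype.card X : ℝ) ^ i)⁻¹ * insectWeight (Fintype.card X) n i
      else 0 := by
  rw [insectP, ← sum_filter]
  refine sum_congr (by ext i; simp only [mem_Icc, mem_filter]; omega) fun i _ => ?_
  rw [insectWeight, one_div, mul_assoc]

/-- An insect that climbs `i` levels lands uniformly in the ball of radius `n - i`. -/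
theorem mulVecLin_insectP :
    (Matrix.of fun x y : Fin n → X => insectP x y).mulVecLin =
      ∑ m ∈ range n, insectWeight (Fintype.card X) n (n - m) • ballAverage m := by
  refine LinearMap.ext fun v => funext fun x => ?_
  set q := Fintype.card X
  have hball : ∀ i ∈ Icc 1 n,
      ∑ y, (if treeDist x y ≤ i then (q ^ i : ℝ)⁻¹ * insectWeight q n i else 0) * v y =
        insectWeight q n i * ballAverage (n - i) v x := fun i hi => by
    rw [ballAverage_apply, card_ball, Nat.sub_sub_self (mem_Icc.1 hi).2, mul_sum, mul_sum,
      ← sum_filter_add_sum_filter_not univ (· ∈ ball (n - i) x), filter_mem_eq_inter,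
      univ_inter, sum_eq_zero (s := filter _ _) fun y hy => ?_, add_zero]
    · refine sum_congr rfl fun y hy => ?_
      rw [if_pos ((treeDist_le_iff (mem_Icc.1 hi).2).2 hy)]
      push_cast
      ring
    · rw [if_neg (mt (treeDist_le_iff (mem_Icc.1 hi).2).1 (mem_filter.1 hy).2), zero_mul]
  simp only [Matrix.mulVecLin_apply, Matrix.mulVec, dotProduct, Matrix.of_apply,
    insectP_eq_sum, sum_mul, LinearMap.sum_apply, Finset.sum_apply, LinearMap.smul_apply,
    Pi.smul_apply, smul_eq_mul]
  rw [sum_comm, sum_congr rfl hball]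
  exact sum_nbij' (n - ·) (n - ·) (by simp; omega) (by simp; omega) (by simp; omega)
    (by simp; omega) fun i hi => by simp only [mem_Icc] at hi; rw [Nat.sub_sub_self hi.2]

end InsectOperator

section Labels

variable {ι : Type*}

theorem ballAverage_mem_constOnFibers_of_lumpable [DecidableEq ι] (hq : 2 ≤ Fintype.card X)
    {ℓ : (Fin n → X) → ι} (hlump : ∀ x x', ℓ x = ℓ x' → ∀ s,
      ∑ y with ℓ y = s, insectP x y = ∑ y with ℓ y = s, insectP x' y) (m : ℕ)
    {v : (Fin n → X) → ℝ} (hv : v ∈ constOnFibers ℝ ℓ) :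
    ballAverage m v ∈ constOnFibers ℝ ℓ := by
  refine apply_mem_of_invariant_sum_smul ballAverage_mul ballAverage_self
    (ν := fun m => insectWeight (Fintype.card X) n (n - m))
    (fun m hm => insectWeight_pos hq (by omega) (by omega)) (fun w hw => ?_) m hv
  rw [← mulVecLin_insectP]
  exact mulVec_mem_constOnFibers hlump hw

theorem card_filter_ball_eq {ℓ : (Fin n → X) → ι}
    (hℓ : ∀ m, ∀ v ∈ constOnFibers ℝ ℓ, ballAverage m v ∈ constOnFibers ℝ ℓ) (m : ℕ)
    {p : (Fin n → X) → Prop} [DecidablePred p] (hp : ∀ u w, ℓ u = ℓ w → (p u ↔ p w))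
    {u w : Fin n → X} (huw : ℓ u = ℓ w) : #{y ∈ ball m u | p y} = #{y ∈ ball m w | p y} := by
  have hind : (fun y => if p y then (1 : ℝ) else 0) ∈ constOnFibers ℝ ℓ := fun y z h => by
    simp only [hp y z h]
  have := hℓ m _ hind u w huw
  have hcard : (#(ball m w) : ℝ) ≠ 0 := by
    exact_mod_cast (card_pos.2 ⟨w, mem_ball_self m w⟩).ne'
  rw [ballAverage_apply, ballAverage_apply, card_ball m u, ← card_ball m w, sum_boole,
    sum_boole] at this
  exact_mod_cast mul_left_cancel₀ (inv_ne_zero hcard) this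

variable {ℓ : (Fin n → X) → ι}

noncomputable def ballProfile (ℓ : (Fin n → X) → ι) (m : ℕ) (u : Fin n → X) : ι → ℕ :=
  fun s => #{v ∈ ball m u | ℓ v = s}

theorem ballProfile_eq_of_mem {m : ℕ} {u v : Fin n → X} (h : v ∈ ball m u) :
    ballProfile ℓ m v = ballProfile ℓ m u := by
  unfold ballProfile
  rw [ball_eq_of_mem h]

theorem ballProfile_eq_of_label_eq
    (hℓ : ∀ m, ∀ v ∈ constOnFibers ℝ ℓ, ballAverage m v ∈ constOnFibers ℝ ℓ) (m : ℕ)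
    {u w : Fin n → X} (huw : ℓ u = ℓ w) : ballProfile ℓ m u = ballProfile ℓ m w :=
  funext fun _ => card_filter_ball_eq hℓ m (fun _ _ h => by rw [h]) huw

theorem exists_mem_ball_label_eq_of_ballProfile_eq {m : ℕ} {u w : Fin n → X}
    (h : ballProfile ℓ m u = ballProfile ℓ m w) : ∃ v ∈ ball m w, ℓ v = ℓ u := by
  have hpos : 0 < ballProfile ℓ m w (ℓ u) :=
    h ▸ card_pos.2 ⟨u, mem_filter.2 ⟨mem_ball_self m u, rfl⟩⟩
  obtain ⟨v, hv⟩ := card_pos.1 hpos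
  exact ⟨v, (mem_filter.1 hv).1, (mem_filter.1 hv).2⟩

/-- Counting in a ball by its children, on each of which `p` is constant. -/
theorem card_filter_ball_eq_mul (i : Fin n) {p : (Fin n → X) → Prop} [DecidablePred p]
    (hp : ∀ u, ∀ v ∈ ball (i + 1) u, p v ↔ p u) (x : Fin n → X) :
    #{u ∈ ball i x | p u} =
      Fintype.card X ^ (n - (i + 1)) * #{a | p (Function.update x i a)} := by
  have hchild : ∀ a, #{u ∈ {u ∈ ball i x | p u} | u i = a} =
      if p (Function.update x i a) then Fintype.card X ^ (n - (i + 1)) else 0 := fun a => by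
    rw [← card_ball (i + 1) (Function.update x i a), ← card_empty, ← apply_ite]
    congr 1
    ext u
    simp only [mem_filter, and_assoc]
    split_ifs with ha
    · rw [mem_ball_succ_update]
      exact ⟨fun h => ⟨h.1, h.2.2⟩,
        fun h => ⟨h.1, (hp _ u (mem_ball_succ_update.2 h)).2 ha, h.2⟩⟩
    · simp only [notMem_empty, iff_false]
      rintro ⟨hu, hpu, rfl⟩
      exact ha ((hp _ u (mem_ball_succ_update.2 ⟨hu, rfl⟩)).1 hpu)
  rw [card_eq_sum_card_fiberwise (f := fun u => u i) (t := univ) fun _ _ => mem_univ _,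
    sum_congr rfl fun a _ => hchild a, sum_ite, sum_const_zero, add_zero, sum_const, smul_eq_mul,
    mul_comm]

theorem card_ballProfile_child_eq
    (hℓ : ∀ m, ∀ v ∈ constOnFibers ℝ ℓ, ballAverage m v ∈ constOnFibers ℝ ℓ) (i : Fin n)
    {x y : Fin n → X} (hxy : ℓ x = ℓ y) (V : ι → ℕ) :
    #{a | ballProfile ℓ (i + 1) (Function.update x i a) = V} =
      #{b | ballProfile ℓ (i + 1) (Function.update y i b) = V} := by
  have hconst : ∀ u, ∀ v ∈ ball (i + 1) u,
      ballProfile ℓ (i + 1) v = V ↔ ballProfile ℓ (i + 1) u = V := fun u v hv => by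
    rw [ballProfile_eq_of_mem hv]
  have h := card_filter_ball_eq hℓ i (p := (ballProfile ℓ (i + 1) · = V))
    (fun u w h => by rw [ballProfile_eq_of_label_eq hℓ _ h]) hxy
  rw [card_filter_ball_eq_mul i hconst, card_filter_ball_eq_mul i hconst] at h
  have : Nonempty X := ⟨x i⟩
  exact Nat.eq_of_mul_eq_mul_left (pow_pos Fintype.card_pos _) h

theorem exists_perm_children
    (hℓ : ∀ m, ∀ v ∈ constOnFibers ℝ ℓ, ballAverage m v ∈ constOnFibers ℝ ℓ) (i : Fin n)
    {x y : Fin n → X} (hxy : ℓ x = ℓ y) :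
    ∃ (σ : Equiv.Perm X) (Q : X → Fin n → X),
      (∀ a, Q a ∈ ball (i + 1) (Function.update y i (σ a))) ∧ Q (x i) = y ∧
        ∀ a, ℓ (Function.update x i a) = ℓ (Q a) := by
  obtain ⟨σ, hσx, hσ⟩ := exists_perm_comp_eq_of_card_fiber_eq
    (card_ballProfile_child_eq hℓ i hxy) (a₀ := x i) (b₀ := y i)
    (by simpa only [Function.update_eq_self] using ballProfile_eq_of_label_eq hℓ _ hxy)
  have hQ : ∀ a, ∃ v ∈ ball (i + 1) (Function.update y i (σ a)),
      ℓ v = ℓ (Function.update x i a) ∧ (a = x i → v = y) := by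
    intro a
    by_cases ha : a = x i
    · subst ha
      rw [hσx, Function.update_eq_self, Function.update_eq_self]
      exact ⟨y, mem_ball_self _ _, hxy.symm, fun _ => rfl⟩
    · obtain ⟨v, hv, hℓv⟩ := exists_mem_ball_label_eq_of_ballProfile_eq (hσ a).symm
      exact ⟨v, hv, hℓv, fun h => absurd h ha⟩
  choose Q hQ using hQ
  exact ⟨σ, Q, fun a => (hQ a).1, (hQ _).2.2 rfl, fun a => (hQ a).2.1.symm⟩

structure IsBallIsometry (ℓ : (Fin n → X) → ι) (m : ℕ) (x y : Fin n → X)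
    (φ : (Fin n → X) → Fin n → X) : Prop where
  map_center : φ x = y
  mapsTo : ∀ u ∈ ball m x, φ u ∈ ball m y
  label_eq : ∀ u ∈ ball m x, ℓ (φ u) = ℓ u
  treeDist_eq : ∀ u ∈ ball m x, ∀ u' ∈ ball m x, treeDist (φ u) (φ u') = treeDist u u'

theorem isBallIsometry_self {x y : Fin n → X} (hxy : ℓ x = ℓ y) :
    IsBallIsometry ℓ n x y fun _ => y where
  map_center := rfl
  mapsTo _ _ := mem_ball_self n y
  label_eq u hu := by rw [ball_self, mem_singleton] at hu; rw [hu, hxy]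
  treeDist_eq u hu u' hu' := by
    rw [ball_self, mem_singleton] at hu hu'
    rw [hu, hu', treeDist_eq_zero_iff.2 rfl, treeDist_eq_zero_iff.2 rfl]

/-- Isometries between the children, matched by `σ`, glue to an isometry of the parent balls. -/
theorem IsBallIsometry.glue {i : Fin n} {x y : Fin n → X} {σ : Equiv.Perm X}
    {Q : X → Fin n → X} {Φ : X → (Fin n → X) → Fin n → X}
    (hQ : ∀ a, Q a ∈ ball (i + 1) (Function.update y i (σ a))) (hQx : Q (x i) = y)
    (hΦ : ∀ a, IsBallIsometry ℓ (i + 1) (Function.update x i a) (Q a) (Φ a)) :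
    IsBallIsometry ℓ i x y fun u => Φ (u i) u := by
  have hchild : ∀ u ∈ ball i x, u ∈ ball (i + 1) (Function.update x i (u i)) :=
    fun u hu => mem_ball_succ_update.2 ⟨hu, rfl⟩
  have himage : ∀ u ∈ ball i x, Φ (u i) u ∈ ball i y ∧ Φ (u i) u i = σ (u i) := fun u hu =>
    mem_ball_succ_update.1 (ball_eq_of_mem (hQ _) ▸ (hΦ _).mapsTo u (hchild u hu))
  refine ⟨?_, fun u hu => (himage u hu).1, fun u hu => (hΦ _).label_eq u (hchild u hu), ?_⟩
  · simpa only [Function.update_eq_self, hQx] using (hΦ (x i)).map_center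
  · intro u hu u' hu'
    by_cases h : u i = u' i
    · simp only [h]
      exact (hΦ _).treeDist_eq u (h ▸ hchild u hu) u' (hchild u' hu')
    · -- `u` and `u'` lie in different children, and so do their images
      have hu'u : u' ∈ ball i u := ball_eq_of_mem hu ▸ hu'
      have himg : Φ (u' i) u' ∈ ball i (Φ (u i) u) :=
        ball_eq_of_mem (himage u hu).1 ▸ (himage u' hu').1
      rw [treeDist_eq_of_mem_ball hu'u h, treeDist_eq_of_mem_ball himg]
      rw [(himage u hu).2, (himage u' hu').2]
      exact σ.injective.ne h

theorem exists_isBallIsometry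
    (hℓ : ∀ m, ∀ v ∈ constOnFibers ℝ ℓ, ballAverage m v ∈ constOnFibers ℝ ℓ) {m : ℕ}
    (hm : m ≤ n) {x y : Fin n → X} (hxy : ℓ x = ℓ y) : ∃ φ, IsBallIsometry ℓ m x y φ := by
  induction hm using Nat.decreasingInduction generalizing x y with
  | self => exact ⟨_, isBallIsometry_self hxy⟩
  | of_succ k hk ih =>
    obtain ⟨σ, Q, hQ, hQx, hℓQ⟩ := exists_perm_children hℓ ⟨k, hk⟩ hxy
    choose Φ hΦ using fun a => ih (hℓQ a)
    exact ⟨_, IsBallIsometry.glue hQ hQx hΦ⟩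

theorem exists_perm_treeDist_label
    (hℓ : ∀ m, ∀ v ∈ constOnFibers ℝ ℓ, ballAverage m v ∈ constOnFibers ℝ ℓ)
    {x y : Fin n → X} (hxy : ℓ x = ℓ y) :
    ∃ g : Equiv.Perm (Fin n → X), (∀ u v, treeDist (g u) (g v) = treeDist u v) ∧
      (∀ u, ℓ (g u) = ℓ u) ∧ g x = y := by
  obtain ⟨φ, hφ⟩ := exists_isBallIsometry hℓ (Nat.zero_le n) hxy
  have hmem : ∀ u, u ∈ ball 0 x := fun u => by simp [ball_zero]
  have hdist : ∀ u v, treeDist (φ u) (φ v) = treeDist u v := fun u v =>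
    hφ.treeDist_eq u (hmem u) v (hmem v)
  have hinj : Function.Injective φ := fun u v h =>
    treeDist_eq_zero_iff.1 (hdist u v ▸ treeDist_eq_zero_iff.2 h)
  exact ⟨Equiv.ofBijective φ (Finite.injective_iff_bijective.1 hinj), hdist,
    fun u => hφ.label_eq u (hmem u), hφ.map_center⟩

end Labels

end InsectChain

theorem stmt_15_general {X : Type*} [Fintype X] {n k : ℕ}
    (hq : 2 ≤ Fintype.card X)
    (L : Fin k → Finset (Fin n → X))
    (hL_part : ∀ x : Fin n → X, ∃! s, x ∈ L s)
    (hlump : ∀ r s : Fin k, ∀ x ∈ L r, ∀ x' ∈ L r,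
        ∑ y ∈ L s, insectP x y = ∑ y ∈ L s, insectP x' y) :
    ∃ K : Subgroup (Equiv.Perm (Fin n → X)),
      (∀ g ∈ K, ∀ x y : Fin n → X, treeDist (g x) (g y) = treeDist x y) ∧
      (∀ x y : Fin n → X, (∃ g ∈ K, g x = y) ↔ ∃ s : Fin k, x ∈ L s ∧ y ∈ L s) := by
  choose ℓ hℓL hℓ_unique using hL_part
  have hL : ∀ s x, x ∈ L s ↔ ℓ x = s :=
    fun s x => ⟨fun h => (hℓ_unique x s h).symm, fun h => h ▸ hℓL x⟩
  have hfiber : ∀ s, ({y | ℓ y = s} : Finset (Fin n → X)) = L s := fun s => by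
    ext y
    simp [hL]
  have hinv := InsectChain.ballAverage_mem_constOnFibers_of_lumpable hq (ℓ := ℓ)
    fun x x' h s => by
      rw [hfiber]
      exact hlump _ s x (hℓL x) x' ((hL _ x').2 h.symm)
  refine ⟨isometrySubgroup treeDist ⊓ ⨅ s, MulAction.stabilizer _ (L s : Set (Fin n → X)),
    fun g hg => (Subgroup.mem_inf.1 hg).1, fun x y => ⟨?_, ?_⟩⟩
  · rintro ⟨g, hg, rfl⟩
    have hg' := Subgroup.mem_iInf.1 (Subgroup.mem_inf.1 hg).2 (ℓ x)
    exact ⟨ℓ x, hℓL x, (MulAction.mem_stabilizer_set.1 hg' x).2 (hℓL x)⟩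
  · rintro ⟨s, hxs, hys⟩
    obtain ⟨g, hdist, hlabel, rfl⟩ :=
      InsectChain.exists_perm_treeDist_label hinv (((hL s x).1 hxs).trans ((hL s y).1 hys).symm)
    refine ⟨g, Subgroup.mem_inf.2 ⟨hdist, Subgroup.mem_iInf.2 fun t =>
      MulAction.mem_stabilizer_set.2 fun z => ?_⟩, rfl⟩
    rw [Equiv.Perm.smul_def, Finset.mem_coe, Finset.mem_coe, hL, hL, hlabel]

/-- Let `𝓛 = {L_1,…,L_k}` be a lumping of the Insect Markov chain on `X^n`.
Then there is a subgroup `K` of the group of permutations of `X^n` preserving the ultrametric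
distance `d` (i.e. of the automorphism group of the rooted `q`-ary tree of depth `n` acting on
its boundary) whose orbits on `X^n` are exactly the parts of `𝓛`. -/
theorem stmt_15 {X : Type*} [Fintype X] {n k : ℕ}
    (hq : 2 ≤ Fintype.card X) (hn : 1 ≤ n)
    (L : Fin k → Finset (Fin n → X))
    (hL_nonempty : ∀ s, (L s).Nonempty)
    (hL_part : ∀ x : Fin n → X, ∃! s, x ∈ L s)
    (hlump : ∀ r s : Fin k, ∀ x ∈ L r, ∀ x' ∈ L r,
        ∑ y ∈ L s, insectP x y = ∑ y ∈ L s, insectP x' y) :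
    ∃ K : Subgroup (Equiv.Perm (Fin n → X)),
      (∀ g ∈ K, ∀ x y : Fin n → X, treeDist (g x) (g y) = treeDist x y) ∧
      (∀ x y : Fin n → X, (∃ g ∈ K, g x = y) ↔ ∃ s : Fin k, x ∈ L s ∧ y ∈ L s) :=
  stmt_15_general hq L hL_part hlump
end
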